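/- arXiv:1211.4170 — 5 statements merged into one kernel-verified Lean document; each statement's English description precedes it below -/
import Mathlib

section
/- Let u be a C^∞ classical solution of (K1). Then for every t ≥ 0 and every x ∈ [0,1] one has 0 ≤ ∂ₓu(x,t) ≤ e^{(s − m₀f₀ − m₁f₁)t}. In particular u(·,t) is nondecreasing on [0,1] for each fixed t. -/
open Set Filter Topology

lemma deriv_nonpos_of_min_right {g : ℝ → ℝ} {a b c : ℝ} (hab : a < b)
    (hg : HasDerivAt g c b) (h : ∀ τ ∈ Set.Icc a b, g b ≤ g τ) : c ≤ 0 := by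
  have hs : Tendsto (slope g b) (𝓝[<] b) (𝓝 c) :=
    (hasDerivAt_iff_tendsto_slope.1 hg).mono_left
      (nhdsWithin_mono _ (fun y hy => ne_of_lt hy))
  refine le_of_tendsto hs ?_
  filter_upwards [Ioo_mem_nhdsLT_of_mem ⟨hab, le_rfl⟩] with τ hτ
  have h1 : 0 ≤ g τ - g b := sub_nonneg.2 (h τ ⟨hτ.1.le, hτ.2.le⟩)
  have h2 : τ - b < 0 := sub_neg.2 hτ.2
  rw [slope_def_field]
  exact div_nonpos_of_nonneg_of_nonpos h1 h2.le

lemma deriv_nonneg_of_max_right {g : ℝ → ℝ} {a b c : ℝ} (hab : a < b)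
    (hg : HasDerivAt g c b) (h : ∀ τ ∈ Set.Icc a b, g τ ≤ g b) : 0 ≤ c := by
  have := deriv_nonpos_of_min_right hab hg.neg (fun τ hτ => neg_le_neg (h τ hτ))
  linarith

set_option maxHeartbeats 1600000 in
/-- gradient estimate `0 ≤ ∂ₓu ≤ e^{(s - m₀f₀ - m₁f₁)t}` for a
smooth classical solution of (K1); in particular `u(·,t)` is nondecreasing. -/
theorem stmt_2 (f0 f1 g0 g1 l0 l1 s m0 m1 : ℝ) (u : ℝ → ℝ → ℝ)
    (hf : f1 < f0) (hf1 : 0 ≤ f1) (hs : s = f0 - f1)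
    (hg0 : g0 ∈ Set.Ioc (0:ℝ) 1) (hg1 : g1 ∈ Set.Ioc (0:ℝ) 1)
    (hl0 : 0 ≤ l0) (hl1 : 0 ≤ l1)
    (hm0 : m0 = l0 * g0) (hm1 : m1 = l1 * g1)
    (hu_smooth : ContDiff ℝ (⊤ : ℕ∞) (Function.uncurry u))
    (hu_pde : ∀ x ∈ Set.Icc (0:ℝ) 1, ∀ t > (0:ℝ),
      deriv (fun τ => u x τ) t + s * (1 - x) * x * deriv (fun y => u y t) x
        = l0 * f0 * (u (x + g0 * (1 - x)) t - u x t)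
          + l1 * f1 * (u (x - g1 * x) t - u x t))
    (hu_init : ∀ x ∈ Set.Icc (0:ℝ) 1, u x 0 = x) :
    (∀ t ≥ (0:ℝ), ∀ x ∈ Set.Icc (0:ℝ) 1,
      0 ≤ deriv (fun y => u y t) x ∧
      deriv (fun y => u y t) x ≤ Real.exp ((s - m0 * f0 - m1 * f1) * t)) ∧
    (∀ t ≥ (0:ℝ), MonotoneOn (fun x => u x t) (Set.Icc (0:ℝ) 1)) := by
  have hspos : 0 < s := by rw [hs]; linarith
  have hf0 : 0 < f0 := lt_of_le_of_lt hf1 hf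
  subst hm0; subst hm1
  set U : ℝ × ℝ → ℝ := Function.uncurry u with hU_def
  have hu := hu_smooth
  have hUd : Differentiable ℝ U := hu.differentiable (by simp)
  have hfd : ContDiff ℝ (⊤ : ℕ∞) (fderiv ℝ U) := hu.fderiv_right (by simp)
  set V : ℝ × ℝ → ℝ := fun p => fderiv ℝ U p (1, 0) with hV_def
  set W : ℝ × ℝ → ℝ := fun p => fderiv ℝ U p (0, 1) with hW_def
  have hV : ContDiff ℝ (⊤ : ℕ∞) V := hfd.clm_apply contDiff_const
  have hW : ContDiff ℝ (⊤ : ℕ∞) W := hfd.clm_apply contDiff_const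
  have hderiv_x : ∀ x t : ℝ, HasDerivAt (fun y => u y t) (V (x, t)) x := by
    intro x t
    have h := (hUd (x,t)).hasFDerivAt.comp_hasDerivAt x
      ((hasDerivAt_id x).prodMk (hasDerivAt_const x t))
    simp at h; exact h
  have hderiv_t : ∀ x t : ℝ, HasDerivAt (fun τ => u x τ) (W (x, t)) t := by
    intro x t
    have h := (hUd (x,t)).hasFDerivAt.comp_hasDerivAt t
      ((hasDerivAt_const t x).prodMk (hasDerivAt_id t))
    exact h
  set Vx : ℝ × ℝ → ℝ := fun p => fderiv ℝ V p (1, 0) with hVx_def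
  set Vt : ℝ × ℝ → ℝ := fun p => fderiv ℝ V p (0, 1) with hVt_def
  set Wx : ℝ × ℝ → ℝ := fun p => fderiv ℝ W p (1, 0) with hWx_def
  have hVxC : ContDiff ℝ (⊤ : ℕ∞) Vx := (hV.fderiv_right (by simp)).clm_apply contDiff_const
  have hVtC : ContDiff ℝ (⊤ : ℕ∞) Vt := (hV.fderiv_right (by simp)).clm_apply contDiff_const
  have hVd : Differentiable ℝ V := hV.differentiable (by simp)
  have hWd : Differentiable ℝ W := hW.differentiable (by simp)
  have hVx_deriv : ∀ x t : ℝ, HasDerivAt (fun y => V (y, t)) (Vx (x, t)) x := by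
    intro x t
    have h := (hVd (x,t)).hasFDerivAt.comp_hasDerivAt x
      ((hasDerivAt_id x).prodMk (hasDerivAt_const x t))
    simp at h; exact h
  have hVt_deriv : ∀ x t : ℝ, HasDerivAt (fun τ => V (x, τ)) (Vt (x, t)) t := by
    intro x t
    have h := (hVd (x,t)).hasFDerivAt.comp_hasDerivAt t
      ((hasDerivAt_const t x).prodMk (hasDerivAt_id t))
    exact h
  have hWx_deriv : ∀ x t : ℝ, HasDerivAt (fun y => W (y, t)) (Wx (x, t)) x := by
    intro x t
    have h := (hWd (x,t)).hasFDerivAt.comp_hasDerivAt x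
      ((hasDerivAt_id x).prodMk (hasDerivAt_const x t))
    simp at h; exact h
  have hmix : ∀ p : ℝ × ℝ, Vt p = Wx p := by
    intro p
    have h1 : HasFDerivAt (fderiv ℝ U) (fderiv ℝ (fderiv ℝ U) p) p :=
      ((hfd.differentiable (by simp)) p).hasFDerivAt
    have hVf : HasFDerivAt V
        ((ContinuousLinearMap.apply ℝ ℝ ((1:ℝ),(0:ℝ))).comp (fderiv ℝ (fderiv ℝ U) p)) p :=
      (ContinuousLinearMap.apply ℝ ℝ ((1:ℝ),(0:ℝ))).hasFDerivAt.comp p h1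
    have hWf : HasFDerivAt W
        ((ContinuousLinearMap.apply ℝ ℝ ((0:ℝ),(1:ℝ))).comp (fderiv ℝ (fderiv ℝ U) p)) p :=
      (ContinuousLinearMap.apply ℝ ℝ ((0:ℝ),(1:ℝ))).hasFDerivAt.comp p h1
    have hsymm := second_derivative_symmetric (f := U) (f' := fderiv ℝ U)
      (fun y => (hUd y).hasFDerivAt) h1 (0,1) (1,0)
    calc Vt p = fderiv ℝ (fderiv ℝ U) p (0,1) (1,0) := by
          simp only [hVt_def]; rw [hVf.fderiv]; rfl
    _ = fderiv ℝ (fderiv ℝ U) p (1,0) (0,1) := hsymm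
    _ = Wx p := by simp only [hWx_def]; rw [hWf.fderiv]; rfl
  -- the differentiated PDE, first on the open interval then on [0,1] by continuity
  have key : ∀ t > (0:ℝ), ∀ x ∈ Set.Icc (0:ℝ) 1,
      Vt (x,t) + s * ((1-x) - x) * V (x,t) + s * (1-x) * x * Vx (x,t)
        = l0 * f0 * ((1-g0) * V (x + g0*(1-x), t) - V (x,t))
          + l1 * f1 * ((1-g1) * V (x - g1*x, t) - V (x,t)) := by
    intro t ht
    set Φ : ℝ → ℝ := fun x =>
      (Vt (x,t) + s * ((1-x) - x) * V (x,t) + s * (1-x) * x * Vx (x,t))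
      - (l0 * f0 * ((1-g0) * V (x + g0*(1-x), t) - V (x,t))
          + l1 * f1 * ((1-g1) * V (x - g1*x, t) - V (x,t))) with hΦ_def
    have hΦcont : Continuous Φ := by
      have hc : ∀ (c d : ℝ), Continuous (fun x : ℝ => (c*x+d, t)) := by
        intro c d; fun_prop
      have hcV := hV.continuous
      have h1 : Continuous fun x : ℝ => Vt (x,t) :=
        hVtC.continuous.comp (by fun_prop : Continuous fun x : ℝ => (x,t))
      have h2 : Continuous fun x : ℝ => Vx (x,t) :=
        hVxC.continuous.comp (by fun_prop : Continuous fun x : ℝ => (x,t))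
      have h3 : Continuous fun x : ℝ => V (x,t) :=
        hcV.comp (by fun_prop : Continuous fun x : ℝ => (x,t))
      have h4 : Continuous fun x : ℝ => V (x + g0*(1-x), t) :=
        hcV.comp (by fun_prop : Continuous fun x : ℝ => (x + g0*(1-x), t))
      have h5 : Continuous fun x : ℝ => V (x - g1*x, t) :=
        hcV.comp (by fun_prop : Continuous fun x : ℝ => (x - g1*x, t))
      have hp1 : Continuous fun x : ℝ => s*((1-x)-x) := by fun_prop
      have hp2 : Continuous fun x : ℝ => s*(1-x)*x := by fun_prop
      rw [hΦ_def]
      exact ((h1.add (hp1.mul h3)).add (hp2.mul h2)).sub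
        ((continuous_const.mul ((continuous_const.mul h4).sub h3)).add
          (continuous_const.mul ((continuous_const.mul h5).sub h3)))
    have hIoo : ∀ x ∈ Set.Ioo (0:ℝ) 1, Φ x = 0 := by
      intro x hx
      set F : ℝ → ℝ := fun y => W (y,t) + s*(1-y)*y * V (y,t) with hF_def
      set G : ℝ → ℝ := fun y =>
        l0 * f0 * (u (y + g0*(1-y)) t - u y t) + l1 * f1 * (u (y - g1*y) t - u y t) with hG_def
      have hFG : ∀ y ∈ Set.Icc (0:ℝ) 1, F y = G y := by
        intro y hy
        have h := hu_pde y hy t ht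
        rw [(hderiv_t y t).deriv, (hderiv_x y t).deriv] at h
        simpa [hF_def, hG_def] using h
      have hpoly : HasDerivAt (fun y : ℝ => s*(1-y)*y) (s*((1-x)-x)) x := by
        have h := (((hasDerivAt_id x).const_sub 1).const_mul s).mul (hasDerivAt_id x)
        exact h.congr_deriv (by simp only [id_eq]; ring)
      have hF' : HasDerivAt F
          (Wx (x,t) + (s*((1-x)-x) * V (x,t) + s*(1-x)*x * Vx (x,t))) x :=
        (hWx_deriv x t).add (hpoly.mul (hVx_deriv x t))
      have hc0 : HasDerivAt (fun y : ℝ => y + g0*(1-y)) (1 - g0) x := by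
        have h := (hasDerivAt_id x).add (((hasDerivAt_id x).const_sub 1).const_mul g0)
        exact h.congr_deriv (by ring)
      have hc1 : HasDerivAt (fun y : ℝ => y - g1*y) (1 - g1) x := by
        have h := (hasDerivAt_id x).sub ((hasDerivAt_id x).const_mul g1)
        exact h.congr_deriv (by ring)
      have houter0 : HasDerivAt (fun y => u (y + g0*(1-y)) t)
          (V (x + g0*(1-x), t) * (1-g0)) x :=
        by have h := (hderiv_x (x + g0*(1-x)) t).comp x hc0; exact h
      have houter1 : HasDerivAt (fun y => u (y - g1*y) t)
          (V (x - g1*x, t) * (1-g1)) x :=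
        by have h := (hderiv_x (x - g1*x) t).comp x hc1; exact h
      have hG' : HasDerivAt G
          (l0*f0 * (V (x + g0*(1-x), t) * (1-g0) - V (x,t))
            + l1*f1 * (V (x - g1*x, t) * (1-g1) - V (x,t))) x :=
        ((houter0.sub (hderiv_x x t)).const_mul (l0*f0)).add
          ((houter1.sub (hderiv_x x t)).const_mul (l1*f1))
      have hdd : deriv F x = deriv G x :=
        (Filter.eventuallyEq_of_mem (Icc_mem_nhds hx.1 hx.2) hFG).deriv_eq
      have heq : Wx (x,t) + (s*((1-x)-x) * V (x,t) + s*(1-x)*x * Vx (x,t))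
          = l0*f0 * (V (x + g0*(1-x), t) * (1-g0) - V (x,t))
            + l1*f1 * (V (x - g1*x, t) * (1-g1) - V (x,t)) := by
        rw [← hF'.deriv, ← hG'.deriv]; exact hdd
      simp only [hΦ_def]
      rw [hmix (x,t)]
      linear_combination heq
    have hclos : Set.EqOn Φ 0 (Set.Icc (0:ℝ) 1) := by
      have := (Set.EqOn.closure (fun x hx => hIoo x hx) hΦcont continuous_const)
      rwa [closure_Ioo (by norm_num : (0:ℝ) ≠ 1)] at this
    intro x hx
    have := hclos hx
    simp only [hΦ_def, Pi.zero_apply] at this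
    linarith
  -- initial condition for V
  have hinit : ∀ x ∈ Set.Icc (0:ℝ) 1, V (x, 0) = 1 := by
    have hIoo : ∀ x ∈ Set.Ioo (0:ℝ) 1, V (x,0) - 1 = 0 := by
      intro x hx
      have hev : (fun y => u y 0) =ᶠ[𝓝 x] (fun y => y) :=
        Filter.eventuallyEq_of_mem (Icc_mem_nhds hx.1 hx.2) hu_init
      have h1 : deriv (fun y => u y 0) x = V (x,0) := (hderiv_x x 0).deriv
      have h2 : deriv (fun y => u y 0) x = 1 := by rw [hev.deriv_eq]; simp
      rw [h1] at h2; rw [h2]; ring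
    have hcont : Continuous fun x : ℝ => V (x,0) - 1 :=
      ((hV.continuous).comp (by fun_prop : Continuous fun x : ℝ => (x,(0:ℝ)))).sub continuous_const
    have hclos := (Set.EqOn.closure (fun x hx => hIoo x hx) hcont continuous_const)
    rw [closure_Ioo (by norm_num : (0:ℝ) ≠ 1)] at hclos
    intro x hx
    have := hclos hx
    simp only [Pi.zero_apply] at this
    linarith

  -- LOWER BOUND via maximum principle
  have hspos' : 0 < s := hspos
  have hlow : ∀ T > (0:ℝ), ∀ x ∈ Set.Icc (0:ℝ) 1, ∀ t ∈ Set.Icc (0:ℝ) T, 0 ≤ V (x,t) := by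
    intro T hT
    by_contra hcon
    push_neg at hcon
    obtain ⟨x1, hx1, t1, ht1, hneg⟩ := hcon
    set Φ : ℝ × ℝ → ℝ := fun p => Real.exp (-(s+1) * p.2) * V p with hΦ_def
    have hΦcont : Continuous Φ :=
      (Real.continuous_exp.comp (continuous_const.mul continuous_snd)).mul hV.continuous
    have hcomp : IsCompact (Set.Icc (0:ℝ) 1 ×ˢ Set.Icc (0:ℝ) T) :=
      isCompact_Icc.prod isCompact_Icc
    obtain ⟨q, hq, hqmin'⟩ := hcomp.exists_isMinOn
      ⟨(x1,t1), Set.mk_mem_prod hx1 ht1⟩ hΦcont.continuousOn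
    obtain ⟨x₀, t₀⟩ := q
    have hqmin := isMinOn_iff.1 hqmin'
    have hx₀ : x₀ ∈ Set.Icc (0:ℝ) 1 := hq.1
    have ht₀ : t₀ ∈ Set.Icc (0:ℝ) T := hq.2
    have hΦneg : Φ (x₀, t₀) < 0 := by
      have h1 := hqmin (x1,t1) (Set.mk_mem_prod hx1 ht1)
      have h2 : Φ (x1, t1) < 0 := mul_neg_of_pos_of_neg (Real.exp_pos _) hneg
      exact lt_of_le_of_lt h1 h2
    have hμneg : V (x₀, t₀) < 0 := by
      by_contra hge; push_neg at hge
      have : 0 ≤ Φ (x₀,t₀) := mul_nonneg (Real.exp_pos _).le hge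
      linarith
    have ht₀pos : 0 < t₀ := by
      rcases lt_or_eq_of_le ht₀.1 with h | h
      · exact h
      · exfalso; rw [← h] at hμneg; rw [hinit x₀ hx₀] at hμneg; linarith
    -- time derivative at the minimum
    have hgd := (((hasDerivAt_id t₀).const_mul (-(s+1))).exp).mul (hVt_deriv x₀ t₀)
    simp only [id_eq] at hgd
    have hder_le := deriv_nonpos_of_min_right ht₀pos hgd (fun τ hτ => by
      have h1 := hqmin (x₀,τ) (Set.mk_mem_prod hx₀ ⟨hτ.1, hτ.2.trans ht₀.2⟩)
      simpa [hΦ_def] using h1)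
    have hVtle : Vt (x₀,t₀) ≤ (s+1) * V (x₀,t₀) := by
      nlinarith [Real.exp_pos (-(s+1) * t₀), hder_le]
    -- space derivative term vanishes
    have hspace : s * (1-x₀) * x₀ * Vx (x₀,t₀) = 0 := by
      rcases eq_or_lt_of_le hx₀.1 with h0 | h0
      · rw [← h0]; ring
      rcases eq_or_lt_of_le hx₀.2 with h1 | h1
      · rw [h1]; ring
      · have hloc : IsLocalMin (fun y => Real.exp (-(s+1) * t₀) * V (y, t₀)) x₀ := by
          refine Filter.eventually_of_mem (Icc_mem_nhds h0 h1) (fun y hy => ?_)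
          have := hqmin (y, t₀) (Set.mk_mem_prod hy ht₀)
          simpa [hΦ_def] using this
        have hd : HasDerivAt (fun y => Real.exp (-(s+1) * t₀) * V (y, t₀))
            (Real.exp (-(s+1) * t₀) * Vx (x₀,t₀)) x₀ := (hVx_deriv x₀ t₀).const_mul _
        have hz := hloc.deriv_eq_zero
        rw [hd.deriv] at hz
        rcases mul_eq_zero.1 hz with h | h
        · exact absurd h (ne_of_gt (Real.exp_pos _))
        · rw [h]; ring
    -- neighbor comparisons
    have hy0 : x₀ + g0*(1-x₀) ∈ Set.Icc (0:ℝ) 1 := by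
      constructor <;> nlinarith [hx₀.1, hx₀.2, hg0.1, hg0.2]
    have hy1 : x₀ - g1*x₀ ∈ Set.Icc (0:ℝ) 1 := by
      constructor <;> nlinarith [hx₀.1, hx₀.2, hg1.1, hg1.2]
    have hB0 : V (x₀,t₀) ≤ V (x₀ + g0*(1-x₀), t₀) := by
      have := hqmin _ (Set.mk_mem_prod hy0 ht₀)
      simp only [hΦ_def] at this
      exact le_of_mul_le_mul_left this (Real.exp_pos _)
    have hB1 : V (x₀,t₀) ≤ V (x₀ - g1*x₀, t₀) := by
      have := hqmin _ (Set.mk_mem_prod hy1 ht₀)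
      simp only [hΦ_def] at this
      exact le_of_mul_le_mul_left this (Real.exp_pos _)
    have hkey := key t₀ ht₀pos x₀ hx₀
    have hc0' : 0 ≤ l0*f0*(1-g0) :=
      mul_nonneg (mul_nonneg hl0 hf0.le) (by linarith [hg0.2])
    have hc1' : 0 ≤ l1*f1*(1-g1) :=
      mul_nonneg (mul_nonneg hl1 hf1) (by linarith [hg1.2])
    have h1 : l0*f0*(1-g0) * V (x₀,t₀) ≤ l0*f0*(1-g0) * V (x₀ + g0*(1-x₀), t₀) :=
      mul_le_mul_of_nonneg_left hB0 hc0'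
    have h2 : l1*f1*(1-g1) * V (x₀,t₀) ≤ l1*f1*(1-g1) * V (x₀ - g1*x₀, t₀) :=
      mul_le_mul_of_nonneg_left hB1 hc1'
    have hfac : 0 < 1 + 2*s*(1-x₀) + (l0*f0*g0 + l1*f1*g1) := by
      have c0 : 0 ≤ l0*f0*g0 := mul_nonneg (mul_nonneg hl0 hf0.le) hg0.1.le
      have c1 : 0 ≤ l1*f1*g1 := mul_nonneg (mul_nonneg hl1 hf1) hg1.1.le
      nlinarith [hx₀.2, hspos']
    have hprod : V (x₀,t₀) * (1 + 2*s*(1-x₀) + (l0*f0*g0 + l1*f1*g1)) < 0 :=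
      mul_neg_of_neg_of_pos hμneg hfac
    nlinarith [hkey, hspace, hVtle, h1, h2, hprod]
  -- UPPER BOUND via maximum principle (with an ε-margin)
  have hupε : ∀ ε > (0:ℝ), ∀ T > (0:ℝ), ∀ x ∈ Set.Icc (0:ℝ) 1, ∀ t ∈ Set.Icc (0:ℝ) T,
      Real.exp (-(s - l0*g0*f0 - l1*g1*f1 + ε) * t) * V (x,t) ≤ 1 := by
    intro ε hε T hT
    set β : ℝ := s - l0*g0*f0 - l1*g1*f1 + ε with hβ_def
    by_contra hcon
    push_neg at hcon
    obtain ⟨x1, hx1, t1, ht1, hgt⟩ := hcon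
    set Ψ : ℝ × ℝ → ℝ := fun p => Real.exp (-β * p.2) * V p with hΨ_def
    have hΨcont : Continuous Ψ :=
      (Real.continuous_exp.comp (continuous_const.mul continuous_snd)).mul hV.continuous
    have hcomp : IsCompact (Set.Icc (0:ℝ) 1 ×ˢ Set.Icc (0:ℝ) T) :=
      isCompact_Icc.prod isCompact_Icc
    obtain ⟨q, hq, hqmax'⟩ := hcomp.exists_isMaxOn
      ⟨(x1,t1), Set.mk_mem_prod hx1 ht1⟩ hΨcont.continuousOn
    obtain ⟨x₀, t₀⟩ := q
    have hqmax := isMaxOn_iff.1 hqmax'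
    have hx₀ : x₀ ∈ Set.Icc (0:ℝ) 1 := hq.1
    have ht₀ : t₀ ∈ Set.Icc (0:ℝ) T := hq.2
    have hΨbig : 1 < Ψ (x₀, t₀) := by
      have h1 := hqmax (x1,t1) (Set.mk_mem_prod hx1 ht1)
      exact lt_of_lt_of_le hgt h1
    have hμpos : 0 < V (x₀, t₀) := by
      by_contra hge; push_neg at hge
      have : Ψ (x₀,t₀) ≤ 0 := mul_nonpos_of_nonneg_of_nonpos (Real.exp_pos _).le hge
      linarith
    have ht₀pos : 0 < t₀ := by
      rcases lt_or_eq_of_le ht₀.1 with h | h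
      · exact h
      · exfalso
        have : Ψ (x₀, t₀) = 1 := by
          simp only [hΨ_def, ← h]
          rw [hinit x₀ hx₀]
          simp
        linarith
    have hgd := (((hasDerivAt_id t₀).const_mul (-β)).exp).mul (hVt_deriv x₀ t₀)
    simp only [id_eq] at hgd
    have hder_ge := deriv_nonneg_of_max_right ht₀pos hgd (fun τ hτ => by
      have h1 := hqmax (x₀,τ) (Set.mk_mem_prod hx₀ ⟨hτ.1, hτ.2.trans ht₀.2⟩)
      simpa [hΨ_def] using h1)
    have hVtge : β * V (x₀,t₀) ≤ Vt (x₀,t₀) := by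
      nlinarith [Real.exp_pos (-β * t₀), hder_ge]
    have hspace : s * (1-x₀) * x₀ * Vx (x₀,t₀) = 0 := by
      rcases eq_or_lt_of_le hx₀.1 with h0 | h0
      · rw [← h0]; ring
      rcases eq_or_lt_of_le hx₀.2 with h1 | h1
      · rw [h1]; ring
      · have hloc : IsLocalMax (fun y => Real.exp (-β * t₀) * V (y, t₀)) x₀ := by
          refine Filter.eventually_of_mem (Icc_mem_nhds h0 h1) (fun y hy => ?_)
          have := hqmax (y, t₀) (Set.mk_mem_prod hy ht₀)
          simpa [hΨ_def] using this
        have hd : HasDerivAt (fun y => Real.exp (-β * t₀) * V (y, t₀))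
            (Real.exp (-β * t₀) * Vx (x₀,t₀)) x₀ := (hVx_deriv x₀ t₀).const_mul _
        have hz := hloc.deriv_eq_zero
        rw [hd.deriv] at hz
        rcases mul_eq_zero.1 hz with h | h
        · exact absurd h (ne_of_gt (Real.exp_pos _))
        · rw [h]; ring
    have hy0 : x₀ + g0*(1-x₀) ∈ Set.Icc (0:ℝ) 1 := by
      constructor <;> nlinarith [hx₀.1, hx₀.2, hg0.1, hg0.2]
    have hy1 : x₀ - g1*x₀ ∈ Set.Icc (0:ℝ) 1 := by
      constructor <;> nlinarith [hx₀.1, hx₀.2, hg1.1, hg1.2]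
    have hB0 : V (x₀ + g0*(1-x₀), t₀) ≤ V (x₀,t₀) := by
      have := hqmax _ (Set.mk_mem_prod hy0 ht₀)
      simp only [hΨ_def] at this
      exact le_of_mul_le_mul_left this (Real.exp_pos _)
    have hB1 : V (x₀ - g1*x₀, t₀) ≤ V (x₀,t₀) := by
      have := hqmax _ (Set.mk_mem_prod hy1 ht₀)
      simp only [hΨ_def] at this
      exact le_of_mul_le_mul_left this (Real.exp_pos _)
    have hkey := key t₀ ht₀pos x₀ hx₀
    have hc0' : 0 ≤ l0*f0*(1-g0) :=
      mul_nonneg (mul_nonneg hl0 hf0.le) (by linarith [hg0.2])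
    have hc1' : 0 ≤ l1*f1*(1-g1) :=
      mul_nonneg (mul_nonneg hl1 hf1) (by linarith [hg1.2])
    have h1 : l0*f0*(1-g0) * V (x₀ + g0*(1-x₀), t₀) ≤ l0*f0*(1-g0) * V (x₀,t₀) :=
      mul_le_mul_of_nonneg_left hB0 hc0'
    have h2 : l1*f1*(1-g1) * V (x₀ - g1*x₀, t₀) ≤ l1*f1*(1-g1) * V (x₀,t₀) :=
      mul_le_mul_of_nonneg_left hB1 hc1'
    have hfac : 0 < ε + 2*s*(1-x₀) := by nlinarith [hx₀.2, hspos']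
    have hprod : 0 < (ε + 2*s*(1-x₀)) * V (x₀,t₀) := mul_pos hfac hμpos
    nlinarith [hkey, hspace, hVtge, h1, h2, hprod]
  -- pass to the limit ε → 0 in the upper bound
  have hup : ∀ t > (0:ℝ), ∀ x ∈ Set.Icc (0:ℝ) 1,
      V (x,t) ≤ Real.exp ((s - l0*g0*f0 - l1*g1*f1) * t) := by
    intro t ht x hx
    have hbd : ∀ ε > (0:ℝ), V (x,t) ≤ Real.exp ((s - l0*g0*f0 - l1*g1*f1 + ε) * t) := by
      intro ε hε
      have h := hupε ε hε t ht x hx t ⟨ht.le, le_rfl⟩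
      set β : ℝ := s - l0*g0*f0 - l1*g1*f1 + ε
      have hepos := Real.exp_pos (-β * t)
      have hprod : Real.exp (-β * t) * Real.exp (β * t) = 1 := by
        rw [← Real.exp_add]; ring_nf; exact Real.exp_zero
      nlinarith [h, hepos, hprod]
    have htend : Tendsto (fun ε : ℝ => Real.exp ((s - l0*g0*f0 - l1*g1*f1 + ε) * t))
        (𝓝[>] (0:ℝ)) (𝓝 (Real.exp ((s - l0*g0*f0 - l1*g1*f1) * t))) := by
      have hc : Continuous fun ε : ℝ => Real.exp ((s - l0*g0*f0 - l1*g1*f1 + ε) * t) := by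
        fun_prop
      have h0 := (hc.tendsto 0).mono_left
        (nhdsWithin_le_nhds : 𝓝[Set.Ioi (0:ℝ)] 0 ≤ 𝓝 0)
      simpa using h0
    exact ge_of_tendsto htend
      (Filter.eventually_of_mem self_mem_nhdsWithin (fun ε hε => hbd ε hε))
  -- assemble the conclusions
  have hmain : ∀ t ≥ (0:ℝ), ∀ x ∈ Set.Icc (0:ℝ) 1,
      0 ≤ deriv (fun y => u y t) x ∧
      deriv (fun y => u y t) x ≤ Real.exp ((s - l0*g0*f0 - l1*g1*f1) * t) := by
    intro t ht x hx
    rw [(hderiv_x x t).deriv]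
    rcases eq_or_lt_of_le ht with h0 | h0
    · rw [← h0, hinit x hx]
      norm_num
    · constructor
      · exact hlow t h0 x hx t ⟨h0.le, le_rfl⟩
      · exact hup t h0 x hx
  refine ⟨hmain, ?_⟩
  intro t ht
  have hcont : ContinuousOn (fun x => u x t) (Set.Icc (0:ℝ) 1) :=
    (hu.continuous.comp (by fun_prop : Continuous fun x : ℝ => (x, t))).continuousOn
  have hdiff : DifferentiableOn ℝ (fun x => u x t) (interior (Set.Icc (0:ℝ) 1)) :=
    fun x _ => (hderiv_x x t).differentiableAt.differentiableWithinAt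
  refine MonotoneOn.mono (monotoneOn_of_deriv_nonneg (convex_Icc (0:ℝ) 1) hcont hdiff ?_)
    (le_refl _)
  intro x hx
  rw [interior_Icc] at hx
  exact (hmain t ht x ⟨hx.1.le, hx.2.le⟩).1
end

section
/- Let u be a C^∞ classical solution of (K1). Then for every t ≥ 0 the map x ↦ u(x,t) is convex on [0,1]; more precisely ∂²ₓₓu(x,t) ≥ 0 for all x ∈ [0,1], t ≥ 0, and there exist constants C > 0 and μ ∈ ℝ such that ∂²ₓₓu(x,t) ≤ C e^{μt} for all x ∈ [0,1] and t ≥ 0. -/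
open Set Filter Topology

/-- If `h` has derivative `d` at `t > 0` and `h t ≤ h τ` for all `τ ∈ [0, t]`,
then `d ≤ 0`. -/
lemma right_min_deriv_nonpos {h : ℝ → ℝ} {d t : ℝ} (ht : 0 < t)
    (hd : HasDerivAt h d t) (hmin : ∀ τ ∈ Set.Icc 0 t, h t ≤ h τ) : d ≤ 0 := by
  have hslope : Tendsto (slope h t) (𝓝[≠] t) (𝓝 d) :=
    hasDerivAt_iff_tendsto_slope.1 hd
  have hlt : Tendsto (slope h t) (𝓝[<] t) (𝓝 d) :=
    hslope.mono_left (nhdsWithin_mono _ (fun y hy => ne_of_lt hy))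
  refine le_of_tendsto hlt ?_
  filter_upwards [Ioo_mem_nhdsLT_of_mem (⟨ht, le_refl t⟩ : t ∈ Set.Ioc 0 t)] with τ hτ
  have h1 : h t ≤ h τ := hmin τ ⟨hτ.1.le, hτ.2.le⟩
  have h2 : τ - t < 0 := by linarith [hτ.2]
  rw [slope_def_field]
  exact div_nonpos_of_nonneg_of_nonpos (by linarith) (by linarith)

/-- Minimum principle for a transport equation with nonlocal zero-order terms
and a nonnegative source, on the strip `[0,1] × [0,∞)`. -/
lemma min_principle (b c0 y0 y1 : ℝ → ℝ) (a0 a1 K : ℝ)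
    (F Ft Fx r : ℝ → ℝ → ℝ)
    (hb0 : b 0 = 0) (hb1 : b 1 = 0)
    (ha0 : 0 ≤ a0) (ha1 : 0 ≤ a1)
    (hy0 : ∀ x ∈ Set.Icc (0:ℝ) 1, y0 x ∈ Set.Icc (0:ℝ) 1)
    (hy1 : ∀ x ∈ Set.Icc (0:ℝ) 1, y1 x ∈ Set.Icc (0:ℝ) 1)
    (hK : ∀ x ∈ Set.Icc (0:ℝ) 1, c0 x + a0 + a1 ≤ K)
    (hFcont : Continuous (Function.uncurry F))
    (hFt : ∀ x t, HasDerivAt (fun τ => F x τ) (Ft x t) t)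
    (hFx : ∀ x t, HasDerivAt (fun y => F y t) (Fx x t) x)
    (hr : ∀ x ∈ Set.Icc (0:ℝ) 1, ∀ t > (0:ℝ), 0 ≤ r x t)
    (hpde : ∀ x ∈ Set.Icc (0:ℝ) 1, ∀ t > (0:ℝ),
      Ft x t + b x * Fx x t
        = c0 x * F x t + a0 * F (y0 x) t + a1 * F (y1 x) t + r x t)
    (hinit : ∀ x ∈ Set.Icc (0:ℝ) 1, 0 ≤ F x 0) :
    ∀ x ∈ Set.Icc (0:ℝ) 1, ∀ t ≥ (0:ℝ), 0 ≤ F x t := by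
  intro x₀ hx₀ t₀ ht₀
  by_contra hneg
  push_neg at hneg
  rcases eq_or_lt_of_le ht₀ with h0 | ht₀pos
  · exact absurd (hinit x₀ hx₀) (by rw [h0] at hneg ⊢; linarith)
  -- choose ε > 0 so that e^{-K t₀} F x₀ t₀ + ε t₀ < 0
  set ε : ℝ := -Real.exp (-K * t₀) * F x₀ t₀ / (2 * (t₀ + 1)) with hε_def
  have hεpos : 0 < ε := by
    apply div_pos
    · have := Real.exp_pos (-K * t₀)
      nlinarith
    · linarith
  set G : ℝ × ℝ → ℝ := fun p => Real.exp (-K * p.2) * F p.1 p.2 + ε * p.2 with hG_def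
  have hGcont : Continuous G := by
    apply Continuous.add
    · exact ((Real.continuous_exp.comp (continuous_const.mul continuous_snd)).mul
        (hFcont.comp (continuous_fst.prodMk continuous_snd)))
    · exact continuous_const.mul continuous_snd
  set Q : Set (ℝ × ℝ) := Set.Icc (0:ℝ) 1 ×ˢ Set.Icc (0:ℝ) t₀ with hQ_def
  have hQcomp : IsCompact Q := (isCompact_Icc).prod (isCompact_Icc)
  have hQne : Q.Nonempty := ⟨(x₀, t₀), hx₀, le_of_lt ht₀pos, le_refl t₀⟩
  obtain ⟨p, hpQ, hpmin⟩ := hQcomp.exists_isMinOn hQne hGcont.continuousOn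
  obtain ⟨x', t'⟩ := p
  obtain ⟨hx' , ht'0, ht'1⟩ : x' ∈ Set.Icc (0:ℝ) 1 ∧ 0 ≤ t' ∧ t' ≤ t₀ :=
    ⟨hpQ.1, hpQ.2.1, hpQ.2.2⟩
  -- the minimum value is negative
  have hGx₀ : G (x₀, t₀) < 0 := by
    have hexp : 0 < Real.exp (-K * t₀) := Real.exp_pos _
    have hA : 0 < -Real.exp (-K * t₀) * F x₀ t₀ := by nlinarith
    have : ε * t₀ < -Real.exp (-K * t₀) * F x₀ t₀ := by
      rw [hε_def, div_mul_eq_mul_div, div_lt_iff₀ (by linarith : (0:ℝ) < 2 * (t₀ + 1))]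
      nlinarith
    simp only [hG_def]
    linarith
  have hm_neg : G (x', t') < 0 :=
    lt_of_le_of_lt (hpmin (show (x₀,t₀) ∈ Q from ⟨hx₀, ht₀pos.le, le_refl t₀⟩)) hGx₀
  -- the minimal time is positive
  have ht'pos : 0 < t' := by
    rcases eq_or_lt_of_le ht'0 with h | h
    · exfalso
      have : G (x', t') = F x' 0 := by
        simp only [hG_def, ← h]
        simp
      have := hinit x' hx'
      linarith [this, hm_neg, ‹G (x', t') = F x' 0›]
    · exact h
  have hexp' : 0 < Real.exp (-K * t') := Real.exp_pos _
  -- the minimum value of F at time t' is negative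
  have hFneg : F x' t' < 0 := by
    have h1 : Real.exp (-K * t') * F x' t' < 0 := by
      have : 0 ≤ ε * t' := le_of_lt (mul_pos hεpos ht'pos)
      simp only [hG_def] at hm_neg; linarith
    nlinarith
  -- F x' t' is a minimum of F (·, t') over [0,1]
  have hxmin : ∀ x ∈ Set.Icc (0:ℝ) 1, F x' t' ≤ F x t' := by
    intro x hx
    have h2 := hpmin (show (x, t') ∈ Q from ⟨hx, ht'0, ht'1⟩)
    simp only [hG_def, Set.mem_setOf_eq] at h2
    nlinarith [hexp']
  -- the transport term vanishes at the minimum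
  have hbFx : b x' * Fx x' t' = 0 := by
    rcases eq_or_lt_of_le hx'.1 with h0 | h0
    · rw [← h0, hb0]; ring
    rcases eq_or_lt_of_le hx'.2 with h1 | h1
    · rw [h1, hb1]; ring
    · have hloc : IsLocalMin (fun y => F y t') x' := by
        have hnhds : Set.Icc (0:ℝ) 1 ∈ 𝓝 x' := Icc_mem_nhds h0 h1
        exact Filter.eventually_of_mem hnhds (fun y hy => hxmin y hy)
      rw [hloc.hasDerivAt_eq_zero (hFx x' t')]; ring
  -- time derivative of G (x', ·) at t' is nonpositive
  have hder : HasDerivAt (fun τ => Real.exp (-K * τ) * F x' τ + ε * τ)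
      ((-K * Real.exp (-K * t')) * F x' t' + Real.exp (-K * t') * Ft x' t' + ε) t' := by
    have he : HasDerivAt (fun τ : ℝ => Real.exp (-K * τ)) (-K * Real.exp (-K * t')) t' := by
      have := (Real.hasDerivAt_exp (-K * t')).comp t'
        ((hasDerivAt_id t').const_mul (-K))
      simpa [Function.comp_def, mul_comm] using this
    have h2 : HasDerivAt (fun τ : ℝ => ε * τ) ε t' := by
      simpa using (hasDerivAt_id t').const_mul ε
    exact (he.mul (hFt x' t')).add h2
  have hd_nonpos : (-K * Real.exp (-K * t')) * F x' t' + Real.exp (-K * t') * Ft x' t' + ε ≤ 0 := by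
    apply right_min_deriv_nonpos ht'pos hder
    intro τ hτ
    have hQτ : (x', τ) ∈ Q := ⟨hx', hτ.1, le_trans hτ.2 ht'1⟩
    have := hpmin hQτ
    simpa [hG_def] using this
  -- lower bound on Ft from the PDE
  have hFy0 : F x' t' ≤ F (y0 x') t' := hxmin _ (hy0 x' hx')
  have hFy1 : F x' t' ≤ F (y1 x') t' := hxmin _ (hy1 x' hx')
  have hpde' := hpde x' hx' t' ht'pos
  have hr' := hr x' hx' t' ht'pos
  have hK' := hK x' hx'
  have hlow : K * F x' t' ≤ Ft x' t' := by
    have h1 : a0 * F x' t' ≤ a0 * F (y0 x') t' := mul_le_mul_of_nonneg_left hFy0 ha0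
    have h2 : a1 * F x' t' ≤ a1 * F (y1 x') t' := mul_le_mul_of_nonneg_left hFy1 ha1
    nlinarith
  -- upper bound on Ft from the minimality in time
  have hup : Ft x' t' < K * F x' t' := by nlinarith
  linarith

lemma pdx (G : ℝ × ℝ → ℝ) (hG : ContDiff ℝ (⊤ : ℕ∞) G) (x t : ℝ) :
    HasDerivAt (fun y => G (y, t)) (fderiv ℝ G (x, t) (1, 0)) x := by
  have h := (hG.differentiable (by simp) (x, t)).hasFDerivAt
  have hline : HasDerivAt (fun y : ℝ => (y, t)) ((1 : ℝ), (0 : ℝ)) x := by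
    simpa using (hasDerivAt_id x).prodMk (hasDerivAt_const x t)
  exact h.comp_hasDerivAt x hline

lemma pdt (G : ℝ × ℝ → ℝ) (hG : ContDiff ℝ (⊤ : ℕ∞) G) (x t : ℝ) :
    HasDerivAt (fun τ => G (x, τ)) (fderiv ℝ G (x, t) (0, 1)) t := by
  have h := (hG.differentiable (by simp) (x, t)).hasFDerivAt
  have hline : HasDerivAt (fun τ : ℝ => (x, τ)) ((0 : ℝ), (1 : ℝ)) t := by
    simpa using (hasDerivAt_const t x).prodMk (hasDerivAt_id t)
  exact h.comp_hasDerivAt t hline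

lemma pd_contDiff (G : ℝ × ℝ → ℝ) (hG : ContDiff ℝ (⊤ : ℕ∞) G) (w : ℝ × ℝ) :
    ContDiff ℝ (⊤ : ℕ∞) (fun p => fderiv ℝ G p w) :=
  (hG.fderiv_right (by simp)).clm_apply contDiff_const

lemma fderiv_pd (G : ℝ × ℝ → ℝ) (hG : ContDiff ℝ (⊤ : ℕ∞) G) (p z w : ℝ × ℝ) :
    fderiv ℝ (fun q => fderiv ℝ G q w) p z = fderiv ℝ (fderiv ℝ G) p z w := by
  have hD : Differentiable ℝ (fderiv ℝ G) :=
    (hG.fderiv_right (m := (⊤ : ℕ∞)) (by simp)).differentiable (by simp)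
  have h := ((ContinuousLinearMap.apply ℝ ℝ w).hasFDerivAt.comp p
    (hD p).hasFDerivAt).fderiv
  have : (fun q => fderiv ℝ G q w)
      = (ContinuousLinearMap.apply ℝ ℝ w) ∘ (fderiv ℝ G) := rfl
  rw [this, h]
  rfl

lemma clairaut (G : ℝ × ℝ → ℝ) (hG : ContDiff ℝ (⊤ : ℕ∞) G) (x t : ℝ) :
    HasDerivAt (fun y => fderiv ℝ G (y, t) (0, 1))
      (fderiv ℝ (fun p => fderiv ℝ G p (1, 0)) (x, t) (0, 1)) x := by
  have hT : ContDiff ℝ (⊤ : ℕ∞) (fun p => fderiv ℝ G p (0, 1)) := pd_contDiff G hG _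
  have h1 := pdx _ hT x t
  have hsym : fderiv ℝ (fderiv ℝ G) (x, t) (1, 0) (0, 1)
      = fderiv ℝ (fderiv ℝ G) (x, t) (0, 1) (1, 0) := by
    refine second_derivative_symmetric (f := G) (f' := fderiv ℝ G) (x := (x, t))
      (fun y => (hG.differentiable (by simp) y).hasFDerivAt) ?_ _ _
    exact (((hG.fderiv_right (m := (⊤ : ℕ∞)) (by simp)).differentiable (by simp)) (x, t)).hasFDerivAt
  rwa [fderiv_pd G hG _ _ _, hsym, ← fderiv_pd G hG _ _ _] at h1

noncomputable def pV (u : ℝ → ℝ → ℝ) : ℝ × ℝ → ℝ :=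
  fun p => fderiv ℝ (Function.uncurry u) p (1, 0)

noncomputable def pW (u : ℝ → ℝ → ℝ) : ℝ × ℝ → ℝ :=
  fun p => fderiv ℝ (pV u) p (1, 0)

section plumbing

variable {u : ℝ → ℝ → ℝ} (hU : ContDiff ℝ (⊤ : ℕ∞) (Function.uncurry u))
include hU

lemma pV_contDiff : ContDiff ℝ (⊤ : ℕ∞) (pV u) := pd_contDiff _ hU _

lemma pW_contDiff : ContDiff ℝ (⊤ : ℕ∞) (pW u) := pd_contDiff _ (pV_contDiff hU) _

lemma hux (x t : ℝ) : HasDerivAt (fun y => u y t) (pV u (x, t)) x :=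
  pdx (Function.uncurry u) hU x t

lemma hvx (x t : ℝ) : HasDerivAt (fun y => pV u (y, t)) (pW u (x, t)) x :=
  pdx (pV u) (pV_contDiff hU) x t

lemma hvt (x t : ℝ) :
    HasDerivAt (fun τ => pV u (x, τ)) (fderiv ℝ (pV u) (x, t) (0, 1)) t :=
  pdt (pV u) (pV_contDiff hU) x t

lemma hwx (x t : ℝ) :
    HasDerivAt (fun y => pW u (y, t)) (fderiv ℝ (pW u) (x, t) (1, 0)) x :=
  pdx (pW u) (pW_contDiff hU) x t

lemma hwt (x t : ℝ) :
    HasDerivAt (fun τ => pW u (x, τ)) (fderiv ℝ (pW u) (x, t) (0, 1)) t :=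
  pdt (pW u) (pW_contDiff hU) x t

omit hU in
/-- derivative of the drift coefficient -/
lemma hdrift (s x : ℝ) : HasDerivAt (fun y : ℝ => s * (1 - y) * y) (s * (1 - 2 * x)) x := by
  have h1 : HasDerivAt (fun y : ℝ => s * (1 - y)) (-s) x := by
    simpa using ((hasDerivAt_id x).const_sub (1:ℝ)).const_mul s
  have := h1.mul (hasDerivAt_id x)
  simp only [id_eq] at this
  refine this.congr_deriv ?_
  ring

omit hU in
lemma hinner0 (g0 x : ℝ) : HasDerivAt (fun y : ℝ => y + g0 * (1 - y)) (1 - g0) x := by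
  have := (hasDerivAt_id x).add (((hasDerivAt_id x).const_sub (1:ℝ)).const_mul g0)
  simp only [id_eq] at this
  refine this.congr_deriv ?_
  ring

omit hU in
lemma hinner1 (g1 x : ℝ) : HasDerivAt (fun y : ℝ => y - g1 * y) (1 - g1) x := by
  have := (hasDerivAt_id x).sub ((hasDerivAt_id x).const_mul g1)
  simp only [id_eq] at this
  refine this.congr_deriv ?_
  ring

end plumbing

section pde

variable {u : ℝ → ℝ → ℝ} {s g0 g1 l0 l1 f0 f1 : ℝ}
  (hU : ContDiff ℝ (⊤ : ℕ∞) (Function.uncurry u))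
include hU

/-- continuity of a partial application -/
lemma cont_slice {H : ℝ × ℝ → ℝ} (hH : Continuous H) (t : ℝ) :
    Continuous (fun x => H (x, t)) :=
  hH.comp (continuous_id.prodMk continuous_const)

omit hU in
lemma cont_slice' {H : ℝ × ℝ → ℝ} (hH : Continuous H) (t : ℝ) :
    Continuous (fun x => H (x, t)) :=
  hH.comp (continuous_id.prodMk continuous_const)

lemma v_pde
    (hu_pde : ∀ x ∈ Set.Icc (0:ℝ) 1, ∀ t > (0:ℝ),
      deriv (fun τ => u x τ) t + s * (1 - x) * x * deriv (fun y => u y t) x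
        = l0 * f0 * (u (x + g0 * (1 - x)) t - u x t)
          + l1 * f1 * (u (x - g1 * x) t - u x t)) :
    ∀ t > (0:ℝ), ∀ x ∈ Set.Icc (0:ℝ) 1,
      fderiv ℝ (pV u) (x, t) (0, 1) + s * (1 - 2 * x) * pV u (x, t)
          + s * (1 - x) * x * pW u (x, t)
        = l0 * f0 * ((1 - g0) * pV u (x + g0 * (1 - x), t) - pV u (x, t))
          + l1 * f1 * ((1 - g1) * pV u (x - g1 * x, t) - pV u (x, t)) := by
  intro t ht
  -- the two sides of the claimed identity, as functions of x
  set Φ : ℝ → ℝ := fun x =>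
    (fderiv ℝ (pV u) (x, t) (0, 1) + s * (1 - 2 * x) * pV u (x, t)
      + s * (1 - x) * x * pW u (x, t))
    - (l0 * f0 * ((1 - g0) * pV u (x + g0 * (1 - x), t) - pV u (x, t))
      + l1 * f1 * ((1 - g1) * pV u (x - g1 * x, t) - pV u (x, t))) with hΦ_def
  have hVc : Continuous (pV u) := (pV_contDiff hU).continuous
  have hWc : Continuous (pW u) := (pW_contDiff hU).continuous
  have hVtc : Continuous (fun p : ℝ × ℝ => fderiv ℝ (pV u) p (0, 1)) :=
    (pd_contDiff _ (pV_contDiff hU) _).continuous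
  have hΦcont : Continuous Φ := by
    apply Continuous.sub
    · exact ((cont_slice' hVtc t).add
        ((continuous_const.mul ((continuous_const.sub
          (continuous_const.mul continuous_id))) |>.mul
            (cont_slice' hVc t)))).add
        (((continuous_const.mul (continuous_const.sub continuous_id)).mul
          continuous_id).mul (cont_slice' hWc t))
    · apply Continuous.add
      · exact continuous_const.mul ((continuous_const.mul
          (hVc.comp ((continuous_id.add (continuous_const.mul
            (continuous_const.sub continuous_id))).prodMk continuous_const))).sub
          (cont_slice' hVc t))
      · exact continuous_const.mul ((continuous_const.mul
          (hVc.comp ((continuous_id.sub (continuous_const.mul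
            continuous_id)).prodMk continuous_const))).sub (cont_slice' hVc t))
  -- the identity holds on the open interval
  have hIoo : ∀ x ∈ Set.Ioo (0:ℝ) 1, Φ x = 0 := by
    intro x hx
    -- derivative of the left-hand side of the original PDE
    have hL : HasDerivAt
        (fun y => fderiv ℝ (Function.uncurry u) (y, t) (0, 1)
          + s * (1 - y) * y * pV u (y, t))
        (fderiv ℝ (pV u) (x, t) (0, 1)
          + (s * (1 - 2 * x) * pV u (x, t) + s * (1 - x) * x * pW u (x, t))) x := by
      exact (clairaut _ hU x t).add ((hdrift s x).mul (hvx hU x t))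
    -- derivative of the right-hand side of the original PDE
    have h0 : HasDerivAt (fun y => u (y + g0 * (1 - y)) t)
        (pV u (x + g0 * (1 - x), t) * (1 - g0)) x := by
      have := HasDerivAt.comp x (hux hU (x + g0 * (1 - x)) t) (hinner0 g0 x)
      simpa [Function.comp_def] using this
    have h1 : HasDerivAt (fun y => u (y - g1 * y) t)
        (pV u (x - g1 * x, t) * (1 - g1)) x := by
      have := HasDerivAt.comp x (hux hU (x - g1 * x) t) (hinner1 g1 x)
      simpa [Function.comp_def] using this
    have hR : HasDerivAt
        (fun y => l0 * f0 * (u (y + g0 * (1 - y)) t - u y t)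
          + l1 * f1 * (u (y - g1 * y) t - u y t))
        (l0 * f0 * (pV u (x + g0 * (1 - x), t) * (1 - g0) - pV u (x, t))
          + l1 * f1 * (pV u (x - g1 * x, t) * (1 - g1) - pV u (x, t))) x :=
      (((h0.sub (hux hU x t)).const_mul (l0 * f0)).add
        ((h1.sub (hux hU x t)).const_mul (l1 * f1)))
    -- the two sides agree near x
    have hEq : (fun y => fderiv ℝ (Function.uncurry u) (y, t) (0, 1)
          + s * (1 - y) * y * pV u (y, t))
        =ᶠ[𝓝 x] (fun y => l0 * f0 * (u (y + g0 * (1 - y)) t - u y t)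
          + l1 * f1 * (u (y - g1 * y) t - u y t)) := by
      filter_upwards [isOpen_Ioo.mem_nhds hx] with y hy
      have hpde := hu_pde y ⟨hy.1.le, hy.2.le⟩ t ht
      have hdt : deriv (fun τ => u y τ) t
          = fderiv ℝ (Function.uncurry u) (y, t) (0, 1) :=
        (pdt (Function.uncurry u) hU y t).deriv
      have hdx : deriv (fun z => u z t) y = pV u (y, t) := (hux hU y t).deriv
      rw [hdt, hdx] at hpde
      exact hpde
    have := hL.unique (hR.congr_of_eventuallyEq hEq)
    simp only [hΦ_def]
    linear_combination this
  -- extend to the closed interval by continuity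
  intro x hx
  have hclos : Set.EqOn Φ (fun _ => (0:ℝ)) (closure (Set.Ioo (0:ℝ) 1)) :=
    Set.EqOn.closure (fun y hy => hIoo y hy) hΦcont continuous_const
  have : Φ x = 0 := by
    have hxc : x ∈ closure (Set.Ioo (0:ℝ) 1) := by
      rw [closure_Ioo (by norm_num : (0:ℝ) ≠ 1)]; exact hx
    exact hclos hxc
  simp only [hΦ_def] at this
  linarith

omit hU in
lemma hdrift2 (s x : ℝ) : HasDerivAt (fun y : ℝ => s * (1 - 2 * y)) (-(2 * s)) x := by
  have := (((hasDerivAt_id x).const_mul (2:ℝ)).const_sub 1).const_mul s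
  simp only [id_eq] at this
  refine this.congr_deriv ?_
  ring

lemma w_pde
    (hv_pde : ∀ t > (0:ℝ), ∀ x ∈ Set.Icc (0:ℝ) 1,
      fderiv ℝ (pV u) (x, t) (0, 1) + s * (1 - 2 * x) * pV u (x, t)
          + s * (1 - x) * x * pW u (x, t)
        = l0 * f0 * ((1 - g0) * pV u (x + g0 * (1 - x), t) - pV u (x, t))
          + l1 * f1 * ((1 - g1) * pV u (x - g1 * x, t) - pV u (x, t))) :
    ∀ t > (0:ℝ), ∀ x ∈ Set.Icc (0:ℝ) 1,
      fderiv ℝ (pW u) (x, t) (0, 1) - 2 * s * pV u (x, t)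
          + 2 * s * (1 - 2 * x) * pW u (x, t)
          + s * (1 - x) * x * fderiv ℝ (pW u) (x, t) (1, 0)
        = l0 * f0 * ((1 - g0) ^ 2 * pW u (x + g0 * (1 - x), t) - pW u (x, t))
          + l1 * f1 * ((1 - g1) ^ 2 * pW u (x - g1 * x, t) - pW u (x, t)) := by
  intro t ht
  set Φ : ℝ → ℝ := fun x =>
    (fderiv ℝ (pW u) (x, t) (0, 1) - 2 * s * pV u (x, t)
      + 2 * s * (1 - 2 * x) * pW u (x, t)
      + s * (1 - x) * x * fderiv ℝ (pW u) (x, t) (1, 0))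
    - (l0 * f0 * ((1 - g0) ^ 2 * pW u (x + g0 * (1 - x), t) - pW u (x, t))
      + l1 * f1 * ((1 - g1) ^ 2 * pW u (x - g1 * x, t) - pW u (x, t))) with hΦ_def
  have hVc : Continuous (pV u) := (pV_contDiff hU).continuous
  have hWc : Continuous (pW u) := (pW_contDiff hU).continuous
  have hWtc : Continuous (fun p : ℝ × ℝ => fderiv ℝ (pW u) p (0, 1)) :=
    (pd_contDiff _ (pW_contDiff hU) _).continuous
  have hWxc : Continuous (fun p : ℝ × ℝ => fderiv ℝ (pW u) p (1, 0)) :=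
    (pd_contDiff _ (pW_contDiff hU) _).continuous
  have hΦcont : Continuous Φ := by
    apply Continuous.sub
    · exact (((cont_slice' hWtc t).sub
        (continuous_const.mul (cont_slice' hVc t))).add
        ((continuous_const.mul (continuous_const.sub
          (continuous_const.mul continuous_id))).mul (cont_slice' hWc t))).add
        ((((continuous_const.mul (continuous_const.sub continuous_id)).mul
          continuous_id).mul (cont_slice' hWxc t)))
    · apply Continuous.add
      · exact continuous_const.mul ((continuous_const.mul
          (hWc.comp ((continuous_id.add (continuous_const.mul
            (continuous_const.sub continuous_id))).prodMk continuous_const))).sub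
          (cont_slice' hWc t))
      · exact continuous_const.mul ((continuous_const.mul
          (hWc.comp ((continuous_id.sub (continuous_const.mul
            continuous_id)).prodMk continuous_const))).sub (cont_slice' hWc t))
  have hIoo : ∀ x ∈ Set.Ioo (0:ℝ) 1, Φ x = 0 := by
    intro x hx
    have hL : HasDerivAt
        (fun y => fderiv ℝ (pV u) (y, t) (0, 1) + s * (1 - 2 * y) * pV u (y, t)
          + s * (1 - y) * y * pW u (y, t))
        ((fderiv ℝ (pW u) (x, t) (0, 1)
          + (-(2 * s) * pV u (x, t) + s * (1 - 2 * x) * pW u (x, t)))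
          + (s * (1 - 2 * x) * pW u (x, t)
            + s * (1 - x) * x * fderiv ℝ (pW u) (x, t) (1, 0))) x := by
      exact ((clairaut _ (pV_contDiff hU) x t).add
        ((hdrift2 s x).mul (hvx hU x t))).add ((hdrift s x).mul (hwx hU x t))
    have h0 : HasDerivAt (fun y => pV u (y + g0 * (1 - y), t))
        (pW u (x + g0 * (1 - x), t) * (1 - g0)) x := by
      have := HasDerivAt.comp x (hvx hU (x + g0 * (1 - x)) t) (hinner0 g0 x)
      simpa [Function.comp_def] using this
    have h1 : HasDerivAt (fun y => pV u (y - g1 * y, t))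
        (pW u (x - g1 * x, t) * (1 - g1)) x := by
      have := HasDerivAt.comp x (hvx hU (x - g1 * x) t) (hinner1 g1 x)
      simpa [Function.comp_def] using this
    have hR : HasDerivAt
        (fun y => l0 * f0 * ((1 - g0) * pV u (y + g0 * (1 - y), t) - pV u (y, t))
          + l1 * f1 * ((1 - g1) * pV u (y - g1 * y, t) - pV u (y, t)))
        (l0 * f0 * ((1 - g0) * (pW u (x + g0 * (1 - x), t) * (1 - g0)) - pW u (x, t))
          + l1 * f1 * ((1 - g1) * (pW u (x - g1 * x, t) * (1 - g1)) - pW u (x, t)))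
        x :=
      ((((h0.const_mul (1 - g0)).sub (hvx hU x t)).const_mul (l0 * f0)).add
        (((h1.const_mul (1 - g1)).sub (hvx hU x t)).const_mul (l1 * f1)))
    have hEq : (fun y => fderiv ℝ (pV u) (y, t) (0, 1) + s * (1 - 2 * y) * pV u (y, t)
          + s * (1 - y) * y * pW u (y, t))
        =ᶠ[𝓝 x] (fun y => l0 * f0 * ((1 - g0) * pV u (y + g0 * (1 - y), t) - pV u (y, t))
          + l1 * f1 * ((1 - g1) * pV u (y - g1 * y, t) - pV u (y, t))) := by
      filter_upwards [isOpen_Ioo.mem_nhds hx] with y hy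
      exact hv_pde t ht y ⟨hy.1.le, hy.2.le⟩
    have := hL.unique (hR.congr_of_eventuallyEq hEq)
    simp only [hΦ_def]
    linear_combination this
  intro x hx
  have hclos : Set.EqOn Φ (fun _ => (0:ℝ)) (closure (Set.Ioo (0:ℝ) 1)) :=
    Set.EqOn.closure (fun y hy => hIoo y hy) hΦcont continuous_const
  have : Φ x = 0 := by
    have hxc : x ∈ closure (Set.Ioo (0:ℝ) 1) := by
      rw [closure_Ioo (by norm_num : (0:ℝ) ≠ 1)]; exact hx
    exact hclos hxc
  simp only [hΦ_def] at this
  linarith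

lemma v_init (hu_init : ∀ x ∈ Set.Icc (0:ℝ) 1, u x 0 = x) :
    ∀ x ∈ Set.Icc (0:ℝ) 1, pV u (x, 0) = 1 := by
  have hVc : Continuous (fun x => pV u (x, 0)) :=
    cont_slice' (pV_contDiff hU).continuous 0
  have hIoo : ∀ x ∈ Set.Ioo (0:ℝ) 1, pV u (x, 0) = 1 := by
    intro x hx
    have h1 : HasDerivAt (fun y => u y 0) (1:ℝ) x := by
      have hid : HasDerivAt (fun y : ℝ => y) (1:ℝ) x := hasDerivAt_id x
      apply hid.congr_of_eventuallyEq
      filter_upwards [isOpen_Ioo.mem_nhds hx] with y hy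
      exact hu_init y ⟨hy.1.le, hy.2.le⟩
    exact (hux hU x 0).unique h1
  intro x hx
  have hclos : Set.EqOn (fun x => pV u (x, 0)) (fun _ => (1:ℝ))
      (closure (Set.Ioo (0:ℝ) 1)) :=
    Set.EqOn.closure (fun y hy => hIoo y hy) hVc continuous_const
  have hxc : x ∈ closure (Set.Ioo (0:ℝ) 1) := by
    rw [closure_Ioo (by norm_num : (0:ℝ) ≠ 1)]; exact hx
  exact hclos hxc

lemma w_init (hu_init : ∀ x ∈ Set.Icc (0:ℝ) 1, u x 0 = x) :
    ∀ x ∈ Set.Icc (0:ℝ) 1, pW u (x, 0) = 0 := by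
  have hWc : Continuous (fun x => pW u (x, 0)) :=
    cont_slice' (pW_contDiff hU).continuous 0
  have hIoo : ∀ x ∈ Set.Ioo (0:ℝ) 1, pW u (x, 0) = 0 := by
    intro x hx
    have h1 : HasDerivAt (fun y => pV u (y, 0)) (0:ℝ) x := by
      have hc : HasDerivAt (fun _ : ℝ => (1:ℝ)) (0:ℝ) x := hasDerivAt_const x 1
      apply hc.congr_of_eventuallyEq
      filter_upwards [isOpen_Ioo.mem_nhds hx] with y hy
      exact v_init hU hu_init y ⟨hy.1.le, hy.2.le⟩
    exact (hvx hU x 0).unique h1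
  intro x hx
  have hclos : Set.EqOn (fun x => pW u (x, 0)) (fun _ => (0:ℝ))
      (closure (Set.Ioo (0:ℝ) 1)) :=
    Set.EqOn.closure (fun y hy => hIoo y hy) hWc continuous_const
  have hxc : x ∈ closure (Set.Ioo (0:ℝ) 1) := by
    rw [closure_Ioo (by norm_num : (0:ℝ) ≠ 1)]; exact hx
  exact hclos hxc

end pde

/-- convexity in `x` of a smooth classical solution of (K1),
together with the bound `0 ≤ ∂²ₓₓu ≤ C e^{μt}`. -/
theorem stmt_3 (f0 f1 g0 g1 l0 l1 s m0 m1 : ℝ) (u : ℝ → ℝ → ℝ)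
    (hf : f1 < f0) (hf1 : 0 ≤ f1) (hs : s = f0 - f1)
    (hg0 : g0 ∈ Set.Ioc (0:ℝ) 1) (hg1 : g1 ∈ Set.Ioc (0:ℝ) 1)
    (hl0 : 0 ≤ l0) (hl1 : 0 ≤ l1)
    (hm0 : m0 = l0 * g0) (hm1 : m1 = l1 * g1)
    (hu_smooth : ContDiff ℝ (⊤ : ℕ∞) (Function.uncurry u))
    (hu_pde : ∀ x ∈ Set.Icc (0:ℝ) 1, ∀ t > (0:ℝ),
      deriv (fun τ => u x τ) t + s * (1 - x) * x * deriv (fun y => u y t) x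
        = l0 * f0 * (u (x + g0 * (1 - x)) t - u x t)
          + l1 * f1 * (u (x - g1 * x) t - u x t))
    (hu_init : ∀ x ∈ Set.Icc (0:ℝ) 1, u x 0 = x) :
    (∀ t ≥ (0:ℝ), ConvexOn ℝ (Set.Icc (0:ℝ) 1) (fun x => u x t)) ∧
    (∀ t ≥ (0:ℝ), ∀ x ∈ Set.Icc (0:ℝ) 1,
      0 ≤ iteratedDeriv 2 (fun y => u y t) x) ∧
    (∃ C > (0:ℝ), ∃ μ : ℝ, ∀ t ≥ (0:ℝ), ∀ x ∈ Set.Icc (0:ℝ) 1,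
      iteratedDeriv 2 (fun y => u y t) x ≤ C * Real.exp (μ * t)) := by
  have hU := hu_smooth
  have hf0 : (0:ℝ) < f0 := lt_of_le_of_lt hf1 hf
  have hs0 : (0:ℝ) < s := by rw [hs]; linarith
  have hl0f0 : (0:ℝ) ≤ l0 * f0 := mul_nonneg hl0 hf0.le
  have hl1f1 : (0:ℝ) ≤ l1 * f1 := mul_nonneg hl1 hf1
  have hg0' : 0 ≤ 1 - g0 := by linarith [hg0.2]
  have hg1' : 0 ≤ 1 - g1 := by linarith [hg1.2]
  have hy0mem : ∀ x ∈ Set.Icc (0:ℝ) 1, x + g0 * (1 - x) ∈ Set.Icc (0:ℝ) 1 := by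
    intro x hx
    constructor
    · nlinarith [hx.1, hx.2, hg0.1, hg0.2]
    · nlinarith [hx.1, hx.2, hg0.1, hg0.2]
  have hy1mem : ∀ x ∈ Set.Icc (0:ℝ) 1, x - g1 * x ∈ Set.Icc (0:ℝ) 1 := by
    intro x hx
    constructor
    · nlinarith [hx.1, hx.2, hg1.1, hg1.2]
    · nlinarith [hx.1, hx.2, hg1.1, hg1.2]
  have hb0 : s * (1 - (0:ℝ)) * 0 = 0 := by ring
  have hb1 : s * (1 - (1:ℝ)) * 1 = 0 := by ring
  have hv_pde := v_pde hU hu_pde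
  have hw_pde := w_pde hU hv_pde
  have hvinit := v_init hU hu_init
  have hwinit := w_init hU hu_init
  -- Step 1 : v = ∂ₓ u is nonnegative on the strip
  have hv0 : ∀ x ∈ Set.Icc (0:ℝ) 1, ∀ t ≥ (0:ℝ), 0 ≤ pV u (x, t) := by
    apply min_principle (fun x => s * (1 - x) * x)
      (fun x => -(s * (1 - 2 * x)) - l0 * f0 - l1 * f1)
      (fun x => x + g0 * (1 - x)) (fun x => x - g1 * x)
      (l0 * f0 * (1 - g0)) (l1 * f1 * (1 - g1)) s
      (fun x t => pV u (x, t)) (fun x t => fderiv ℝ (pV u) (x, t) (0, 1))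
      (fun x t => pW u (x, t)) (fun _ _ => 0)
    · exact hb0
    · exact hb1
    · exact mul_nonneg hl0f0 hg0'
    · exact mul_nonneg hl1f1 hg1'
    · exact hy0mem
    · exact hy1mem
    · intro x hx
      nlinarith [mul_nonneg (mul_nonneg hl0f0 hg0.1.le) (le_refl (0:ℝ)),
        mul_nonneg hl0f0 hg0.1.le, mul_nonneg hl1f1 hg1.1.le, hx.1, hx.2, hs0]
    · exact (pV_contDiff hU).continuous
    · exact fun x t => hvt hU x t
    · exact fun x t => hvx hU x t
    · intro x _ t _; exact le_refl 0
    · intro x hx t ht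
      linear_combination hv_pde t ht x hx
    · intro x hx
      rw [hvinit x hx]; norm_num
  -- Step 2 : v ≤ exp (s t)
  have hvU : ∀ x ∈ Set.Icc (0:ℝ) 1, ∀ t ≥ (0:ℝ),
      0 ≤ Real.exp (s * t) - pV u (x, t) := by
    apply min_principle (fun x => s * (1 - x) * x)
      (fun x => -(s * (1 - 2 * x)) - l0 * f0 - l1 * f1)
      (fun x => x + g0 * (1 - x)) (fun x => x - g1 * x)
      (l0 * f0 * (1 - g0)) (l1 * f1 * (1 - g1)) s
      (fun x t => Real.exp (s * t) - pV u (x, t))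
      (fun x t => s * Real.exp (s * t) - fderiv ℝ (pV u) (x, t) (0, 1))
      (fun x t => -pW u (x, t))
      (fun x t => (s - ((-(s * (1 - 2 * x)) - l0 * f0 - l1 * f1)
        + l0 * f0 * (1 - g0) + l1 * f1 * (1 - g1))) * Real.exp (s * t))
    · exact hb0
    · exact hb1
    · exact mul_nonneg hl0f0 hg0'
    · exact mul_nonneg hl1f1 hg1'
    · exact hy0mem
    · exact hy1mem
    · intro x hx
      nlinarith [mul_nonneg hl0f0 hg0.1.le, mul_nonneg hl1f1 hg1.1.le, hx.1, hx.2, hs0]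
    · exact (Real.continuous_exp.comp (continuous_const.mul continuous_snd)).sub
        (pV_contDiff hU).continuous
    · intro x t
      have he : HasDerivAt (fun τ : ℝ => Real.exp (s * τ)) (s * Real.exp (s * t)) t := by
        have := (Real.hasDerivAt_exp (s * t)).comp t ((hasDerivAt_id t).const_mul s)
        simpa [Function.comp_def, mul_comm] using this
      exact he.sub (hvt hU x t)
    · intro x t
      have := (hasDerivAt_const x (Real.exp (s * t))).sub (hvx hU x t)
      exact this.congr_deriv (by ring)
    · intro x hx t ht
      have hc : (-(s * (1 - 2 * x)) - l0 * f0 - l1 * f1)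
          + l0 * f0 * (1 - g0) + l1 * f1 * (1 - g1) ≤ s := by
        nlinarith [mul_nonneg hl0f0 hg0.1.le, mul_nonneg hl1f1 hg1.1.le, hx.1, hx.2, hs0]
      exact mul_nonneg (by linarith) (Real.exp_pos _).le
    · intro x hx t ht
      linear_combination (-1 : ℝ) * hv_pde t ht x hx
    · intro x hx
      rw [hvinit x hx]; norm_num
  -- Step 3 : w = ∂ₓₓ u is nonnegative on the strip
  have hw0 : ∀ x ∈ Set.Icc (0:ℝ) 1, ∀ t ≥ (0:ℝ), 0 ≤ pW u (x, t) := by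
    apply min_principle (fun x => s * (1 - x) * x)
      (fun x => -(2 * s * (1 - 2 * x)) - l0 * f0 - l1 * f1)
      (fun x => x + g0 * (1 - x)) (fun x => x - g1 * x)
      (l0 * f0 * (1 - g0) ^ 2) (l1 * f1 * (1 - g1) ^ 2) (2 * s)
      (fun x t => pW u (x, t)) (fun x t => fderiv ℝ (pW u) (x, t) (0, 1))
      (fun x t => fderiv ℝ (pW u) (x, t) (1, 0))
      (fun x t => 2 * s * pV u (x, t))
    · exact hb0
    · exact hb1
    · exact mul_nonneg hl0f0 (sq_nonneg _)
    · exact mul_nonneg hl1f1 (sq_nonneg _)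
    · exact hy0mem
    · exact hy1mem
    · intro x hx
      nlinarith [mul_nonneg (mul_nonneg hl0f0 hg0.1.le) (by linarith [hg0.2] : (0:ℝ) ≤ 2 - g0),
        mul_nonneg (mul_nonneg hl1f1 hg1.1.le) (by linarith [hg1.2] : (0:ℝ) ≤ 2 - g1),
        hx.1, hx.2, hs0]
    · exact (pW_contDiff hU).continuous
    · exact fun x t => hwt hU x t
    · exact fun x t => hwx hU x t
    · intro x hx t ht
      exact mul_nonneg (by linarith) (hv0 x hx t ht.le)
    · intro x hx t ht
      linear_combination hw_pde t ht x hx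
    · intro x hx
      rw [hwinit x hx]
  -- Step 4 : w ≤ 2 exp (3 s t)
  have hwU : ∀ x ∈ Set.Icc (0:ℝ) 1, ∀ t ≥ (0:ℝ),
      0 ≤ 2 * Real.exp (3 * s * t) - pW u (x, t) := by
    apply min_principle (fun x => s * (1 - x) * x)
      (fun x => -(2 * s * (1 - 2 * x)) - l0 * f0 - l1 * f1)
      (fun x => x + g0 * (1 - x)) (fun x => x - g1 * x)
      (l0 * f0 * (1 - g0) ^ 2) (l1 * f1 * (1 - g1) ^ 2) (2 * s)
      (fun x t => 2 * Real.exp (3 * s * t) - pW u (x, t))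
      (fun x t => 6 * s * Real.exp (3 * s * t) - fderiv ℝ (pW u) (x, t) (0, 1))
      (fun x t => -fderiv ℝ (pW u) (x, t) (1, 0))
      (fun x t => 6 * s * Real.exp (3 * s * t)
        - ((-(2 * s * (1 - 2 * x)) - l0 * f0 - l1 * f1)
          + l0 * f0 * (1 - g0) ^ 2 + l1 * f1 * (1 - g1) ^ 2)
            * (2 * Real.exp (3 * s * t))
        - 2 * s * pV u (x, t))
    · exact hb0
    · exact hb1
    · exact mul_nonneg hl0f0 (sq_nonneg _)
    · exact mul_nonneg hl1f1 (sq_nonneg _)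
    · exact hy0mem
    · exact hy1mem
    · intro x hx
      nlinarith [mul_nonneg (mul_nonneg hl0f0 hg0.1.le) (by linarith [hg0.2] : (0:ℝ) ≤ 2 - g0),
        mul_nonneg (mul_nonneg hl1f1 hg1.1.le) (by linarith [hg1.2] : (0:ℝ) ≤ 2 - g1),
        hx.1, hx.2, hs0]
    · exact (continuous_const.mul (Real.continuous_exp.comp
        ((continuous_const.mul continuous_snd)))).sub (pW_contDiff hU).continuous
    · intro x t
      have he : HasDerivAt (fun τ : ℝ => Real.exp (3 * s * τ))
          (3 * s * Real.exp (3 * s * t)) t := by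
        have := (Real.hasDerivAt_exp (3 * s * t)).comp t
          ((hasDerivAt_id t).const_mul (3 * s))
        simpa [Function.comp_def, mul_comm] using this
      have := (he.const_mul 2).sub (hwt hU x t)
      refine this.congr_deriv ?_
      ring
    · intro x t
      have := (hasDerivAt_const x (2 * Real.exp (3 * s * t))).sub (hwx hU x t)
      exact this.congr_deriv (by ring)
    · intro x hx t ht
      have hc : (-(2 * s * (1 - 2 * x)) - l0 * f0 - l1 * f1)
          + l0 * f0 * (1 - g0) ^ 2 + l1 * f1 * (1 - g1) ^ 2 ≤ 2 * s := by
        nlinarith [mul_nonneg (mul_nonneg hl0f0 hg0.1.le) (by linarith [hg0.2] : (0:ℝ) ≤ 2 - g0),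
          mul_nonneg (mul_nonneg hl1f1 hg1.1.le) (by linarith [hg1.2] : (0:ℝ) ≤ 2 - g1),
          hx.1, hx.2, hs0]
      have hVle : pV u (x, t) ≤ Real.exp (s * t) := by
        linarith [hvU x hx t ht.le]
      have hee : Real.exp (s * t) ≤ Real.exp (3 * s * t) := by
        apply Real.exp_le_exp.2
        nlinarith [hs0, ht]
      nlinarith [Real.exp_pos (3 * s * t),
        mul_nonneg (by linarith : (0:ℝ) ≤ 2 * s - ((-(2 * s * (1 - 2 * x)) - l0 * f0 - l1 * f1)
          + l0 * f0 * (1 - g0) ^ 2 + l1 * f1 * (1 - g1) ^ 2))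
          (Real.exp_pos (3 * s * t)).le,
        mul_nonneg (by linarith : (0:ℝ) ≤ 2 * s)
          (by linarith : (0:ℝ) ≤ Real.exp (3 * s * t) - pV u (x, t))]
    · intro x hx t ht
      linear_combination (-1 : ℝ) * hw_pde t ht x hx
    · intro x hx
      rw [hwinit x hx]
      norm_num [Real.exp_pos]
  -- identification of the second derivative
  have hiter : ∀ t x : ℝ, iteratedDeriv 2 (fun y => u y t) x = pW u (x, t) := by
    intro t x
    have hd1 : deriv (fun y => u y t) = fun y => pV u (y, t) :=
      funext fun y => (hux hU y t).deriv
    rw [iteratedDeriv_succ, iteratedDeriv_one, hd1]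
    exact (hvx hU x t).deriv
  refine ⟨?_, ?_, ?_⟩
  · -- convexity
    intro t ht
    apply convexOn_of_deriv2_nonneg (convex_Icc 0 1)
    · exact (cont_slice' hu_smooth.continuous t).continuousOn
    · exact fun x _ => (hux hU x t).differentiableAt.differentiableWithinAt
    · have hd1 : deriv (fun x => u x t) = fun y => pV u (y, t) :=
        funext fun y => (hux hU y t).deriv
      rw [hd1]
      exact fun x _ => (hvx hU x t).differentiableAt.differentiableWithinAt
    · intro x hx
      rw [interior_Icc] at hx
      have hd1 : deriv (fun x => u x t) = fun y => pV u (y, t) :=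
        funext fun y => (hux hU y t).deriv
      have h2 : deriv^[2] (fun x => u x t) x = pW u (x, t) := by
        rw [Function.iterate_succ_apply', Function.iterate_one, hd1]
        exact (hvx hU x t).deriv
      rw [h2]
      exact hw0 x ⟨hx.1.le, hx.2.le⟩ t ht
  · intro t ht x hx
    rw [hiter t x]
    exact hw0 x hx t ht
  · refine ⟨2, by norm_num, 3 * s, ?_⟩
    intro t ht x hx
    rw [hiter t x]
    linarith [hwU x hx t ht]
end

section
/- Let u be a C^∞ classical solution of (K1), let x ∈ [0,1], and let Y : [0,∞) → ℝ be a differentiable function with Y(0) = x satisfying the quasispecies ODE Y'(t) = −s·Y(t)(1−Y(t)) + m₀f₀(1−Y(t)) − m₁f₁·Y(t) for all t ≥ 0. Then Y(t) ≤ u(x,t) ≤ 1 for every t ≥ 0; that is, the expected frequency under rare mutations dominates the quasispecies dynamics. -/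
open Set Filter Topology

lemma deriv_nonpos_of_left {h : ℝ → ℝ} {b : ℝ} (hd : DifferentiableAt ℝ h b)
    (H : ∀ᶠ τ in 𝓝[<] b, h b ≤ h τ) : deriv h b ≤ 0 := by
  have hl : (𝓝[<] b) ≤ 𝓝[≠] b := nhdsWithin_mono b (fun y hy => ne_of_lt hy)
  have ht : Tendsto (slope h b) (𝓝[<] b) (𝓝 (deriv h b)) :=
    (hasDerivAt_iff_tendsto_slope.1 hd.hasDerivAt).mono_left hl
  refine le_of_tendsto ht ?_
  filter_upwards [H, self_mem_nhdsWithin] with τ hτ (hτb : τ < b)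
  rw [slope_def_field]
  apply div_nonpos_of_nonneg_of_nonpos <;> linarith

lemma deriv_nonneg_of_left {h : ℝ → ℝ} {b : ℝ} (hd : DifferentiableAt ℝ h b)
    (H : ∀ᶠ τ in 𝓝[<] b, h τ ≤ h b) : 0 ≤ deriv h b := by
  have := deriv_nonpos_of_left (h := fun t => -h t) (hd.neg) (by
    filter_upwards [H] with τ hτ; simpa using hτ)
  rw [deriv.fun_neg] at this; linarith

lemma deriv_eq_on_filter {f g : ℝ → ℝ} {a : ℝ} (l : Filter ℝ) [l.NeBot] (hl : l ≤ 𝓝[≠] a)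
    (hf : DifferentiableAt ℝ f a) (hg : DifferentiableAt ℝ g a)
    (hfg : ∀ᶠ y in l, f y = g y) (ha : f a = g a) : deriv f a = deriv g a := by
  have tf : Tendsto (slope f a) l (𝓝 (deriv f a)) :=
    (hasDerivAt_iff_tendsto_slope.1 hf.hasDerivAt).mono_left hl
  have tg : Tendsto (slope g a) l (𝓝 (deriv g a)) :=
    (hasDerivAt_iff_tendsto_slope.1 hg.hasDerivAt).mono_left hl
  have : Tendsto (slope f a) l (𝓝 (deriv g a)) := by
    refine tg.congr' ?_
    filter_upwards [hfg] with y hy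
    rw [slope_def_field, slope_def_field, hy, ha]
  exact tendsto_nhds_unique this tf |>.symm

lemma eq_on_filter {F G : ℝ → ℝ} {a : ℝ} (l : Filter ℝ) [l.NeBot] (hl : l ≤ 𝓝 a)
    (hF : ContinuousAt F a) (hG : ContinuousAt G a)
    (h : ∀ᶠ y in l, F y = G y) : F a = G a := by
  have tf : Tendsto F l (𝓝 (F a)) := hF.tendsto.mono_left hl
  have tg : Tendsto G l (𝓝 (G a)) := hG.tendsto.mono_left hl
  exact tendsto_nhds_unique (tf.congr' h) tg

/-- Barrier lemma: if `g 0 ≤ 0` and `g' ≤ L g` whenever `g ≥ 0`, then `g t1 ≤ 0`. -/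
lemma nonpos_of_deriv_le {g G : ℝ → ℝ} {L t1 : ℝ} (ht1 : 0 ≤ t1)
    (hg : ∀ t ∈ Icc (0:ℝ) t1, HasDerivAt g (G t) t)
    (h0 : g 0 ≤ 0)
    (hcmp : ∀ t ∈ Icc (0:ℝ) t1, 0 ≤ g t → G t ≤ L * g t) :
    g t1 ≤ 0 := by
  by_contra hpos
  push_neg at hpos
  have hcont : ContinuousOn g (Icc 0 t1) := fun t ht => ((hg t ht).continuousAt).continuousWithinAt
  set S : Set ℝ := Icc 0 t1 ∩ g ⁻¹' Iic 0 with hS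
  have hSne : S.Nonempty := ⟨0, ⟨le_refl 0, ht1⟩, h0⟩
  have hScl : IsClosed S := hcont.preimage_isClosed_of_isClosed isClosed_Icc isClosed_Iic
  have hSbd : BddAbove S := ⟨t1, fun t ht => ht.1.2⟩
  set c := sSup S with hc
  have hcS : c ∈ S := (isCompact_Icc.of_isClosed_subset hScl inter_subset_left).sSup_mem hSne
  have hc0 : 0 ≤ c := hcS.1.1
  have hct1 : c ≤ t1 := hcS.1.2
  have hclt : c < t1 :=
    lt_of_le_of_ne hct1 (fun he => absurd (he ▸ hcS.2) (not_le.2 hpos))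
  have hgpos : ∀ t ∈ Ioc c t1, 0 < g t := by
    intro t ht
    by_contra hle
    push_neg at hle
    have htS : t ∈ S := ⟨⟨hc0.trans ht.1.le, ht.2⟩, hle⟩
    exact absurd (le_csSup hSbd htS) (not_le.2 ht.1)
  set h : ℝ → ℝ := fun t => g t * Real.exp (-(L * t)) with hh
  have hder : ∀ t ∈ Icc (0:ℝ) t1, HasDerivAt h ((G t - L * g t) * Real.exp (-(L * t))) t := by
    intro t ht
    have h1 : HasDerivAt (fun t : ℝ => Real.exp (-(L * t))) (Real.exp (-(L * t)) * (-L)) t := by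
      have : HasDerivAt (fun t : ℝ => -(L * t)) (-L) t := by
        simpa using ((hasDerivAt_id t).const_mul L).fun_neg
      exact this.exp
    have := (hg t ht).mul h1
    exact this.congr_deriv (by ring)
  have hanti : AntitoneOn h (Icc c t1) := by
    apply antitoneOn_of_deriv_nonpos (convex_Icc c t1)
    · intro t ht
      exact ((hder t ⟨hc0.trans ht.1, ht.2⟩).continuousAt).continuousWithinAt
    · intro t ht
      rw [interior_Icc] at ht
      exact ((hder t ⟨hc0.trans ht.1.le, ht.2.le⟩).differentiableAt).differentiableWithinAt
    · intro t ht
      rw [interior_Icc] at ht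
      have hd := (hder t ⟨hc0.trans ht.1.le, ht.2.le⟩).deriv
      rw [hd]
      have hgt : 0 < g t := hgpos t ⟨ht.1, ht.2.le⟩
      have := hcmp t ⟨hc0.trans ht.1.le, ht.2.le⟩ hgt.le
      have he : (0:ℝ) < Real.exp (-(L * t)) := Real.exp_pos _
      nlinarith
  have h1 : h t1 ≤ h c := hanti ⟨le_refl c, hct1⟩ ⟨hct1, le_refl t1⟩ hct1
  have hhc : h c ≤ 0 := mul_nonpos_of_nonpos_of_nonneg hcS.2 (Real.exp_pos _).le
  have hht1 : g t1 * Real.exp (-(L * t1)) ≤ 0 := h1.trans hhc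
  have hexp : (0:ℝ) < Real.exp (-(L * t1)) := Real.exp_pos _
  nlinarith

/-- Generic minimum principle skeleton on `[0,1] × [0,T]`. -/
lemma min_principle_s4 (w : ℝ → ℝ → ℝ) (T : ℝ) (hT : 0 < T)
    (hcont : Continuous (Function.uncurry w))
    (hdiff_t : ∀ x t, DifferentiableAt ℝ (w x) t)
    (hdiff_x : ∀ x t, DifferentiableAt ℝ (fun y => w y t) x)
    (h0 : ∀ x ∈ Icc (0:ℝ) 1, 0 ≤ w x 0)
    (key : ∀ x0 ∈ Icc (0:ℝ) 1, ∀ t0 ∈ Ioc (0:ℝ) T,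
      (∀ x ∈ Icc (0:ℝ) 1, ∀ t ∈ Icc (0:ℝ) T, w x0 t0 ≤ w x t) →
      w x0 t0 < 0 →
      deriv (w x0) t0 ≤ 0 →
      (1 - x0) * x0 * deriv (fun y => w y t0) x0 = 0 →
      False) :
    ∀ x ∈ Icc (0:ℝ) 1, ∀ t ∈ Icc (0:ℝ) T, 0 ≤ w x t := by
  have hK : IsCompact ((Icc (0:ℝ) 1) ×ˢ (Icc (0:ℝ) T)) := isCompact_Icc.prod isCompact_Icc
  have hKne : ((Icc (0:ℝ) 1) ×ˢ (Icc (0:ℝ) T)).Nonempty :=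
    ⟨(0, 0), ⟨⟨le_refl 0, zero_le_one⟩, ⟨le_refl 0, hT.le⟩⟩⟩
  obtain ⟨z0, hz0K, hmin⟩ := hK.exists_isMinOn hKne hcont.continuousOn
  obtain ⟨x0, t0⟩ := z0
  have hminK : ∀ x ∈ Icc (0:ℝ) 1, ∀ t ∈ Icc (0:ℝ) T, w x0 t0 ≤ w x t := by
    intro x hx t ht
    exact isMinOn_iff.1 hmin (x, t) ⟨hx, ht⟩
  intro x hx t ht
  rcases le_or_gt 0 (w x0 t0) with hge | hneg
  · exact hge.trans (hminK x hx t ht)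
  exfalso
  have hx0 : x0 ∈ Icc (0:ℝ) 1 := hz0K.1
  have ht0 : t0 ∈ Icc (0:ℝ) T := hz0K.2
  have ht0pos : 0 < t0 := by
    rcases eq_or_lt_of_le ht0.1 with he | h
    · exact absurd (he ▸ hneg) (not_lt.2 (h0 x0 hx0))
    · exact h
  have hderiv_t : deriv (w x0) t0 ≤ 0 := by
    apply deriv_nonpos_of_left (hdiff_t x0 t0)
    have hmem : Ico (0:ℝ) t0 ∈ 𝓝[<] t0 := Ico_mem_nhdsLT_of_mem ⟨ht0pos, le_refl t0⟩
    filter_upwards [hmem] with τ hτ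
    exact hminK x0 hx0 τ ⟨hτ.1, hτ.2.le.trans ht0.2⟩
  have hderiv_x : (1 - x0) * x0 * deriv (fun y => w y t0) x0 = 0 := by
    rcases eq_or_lt_of_le hx0.1 with he | hl
    · rw [← he]; ring
    rcases eq_or_lt_of_le hx0.2 with he | hr
    · rw [he]; ring
    have hloc : IsLocalMin (fun y => w y t0) x0 := by
      have hmem : Icc (0:ℝ) 1 ∈ 𝓝 x0 := Icc_mem_nhds hl hr
      filter_upwards [hmem] with y hy
      exact hminK y hy t0 ht0
    rw [hloc.deriv_eq_zero]; ring
  exact key x0 hx0 t0 ⟨ht0pos, ht0.2⟩ hminK hneg hderiv_t hderiv_x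

section Calc

variable {v : ℝ × ℝ → ℝ}

lemma slice_line (hv : ContDiff ℝ (⊤ : ℕ∞) v) {c : ℝ → ℝ} {c' : ℝ} (x t : ℝ)
    (hc : HasDerivAt c c' x) :
    HasDerivAt (fun y => v (c y, t)) (c' * fderiv ℝ v (c x, t) (1, 0)) x := by
  have hcc : HasDerivAt (fun y => (c y, t)) ((c', 0) : ℝ × ℝ) x :=
    hc.prodMk (hasDerivAt_const x t)
  have h1 := ((hv.differentiable (by simp) (c x, t)).hasFDerivAt).comp_hasDerivAt x hcc
  have h2 : ((c', (0:ℝ)) : ℝ × ℝ) = c' • ((1:ℝ), (0:ℝ)) := by simp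
  have h3 : fderiv ℝ v (c x, t) (c', 0) = c' * fderiv ℝ v (c x, t) (1, 0) := by
    rw [h2, map_smul]; rfl
  rw [← h3]
  exact h1

lemma slice_x (hv : ContDiff ℝ (⊤ : ℕ∞) v) (x t : ℝ) :
    HasDerivAt (fun y => v (y, t)) (fderiv ℝ v (x, t) (1, 0)) x := by
  have := slice_line hv x t (hasDerivAt_id x)
  simpa using this

lemma slice_t (hv : ContDiff ℝ (⊤ : ℕ∞) v) (x t : ℝ) :
    HasDerivAt (fun τ => v (x, τ)) (fderiv ℝ v (x, t) (0, 1)) t := by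
  have hcc : HasDerivAt (fun τ : ℝ => (x, τ)) ((0, 1) : ℝ × ℝ) t :=
    (hasDerivAt_const t x).prodMk (hasDerivAt_id t)
  exact ((hv.differentiable (by simp) (x, t)).hasFDerivAt).comp_hasDerivAt t hcc

lemma second_symm (hv : ContDiff ℝ (⊤ : ℕ∞) v) (z a b : ℝ × ℝ) :
    fderiv ℝ (fderiv ℝ v) z a b = fderiv ℝ (fderiv ℝ v) z b a :=
  second_derivative_symmetric (fun y => (hv.differentiable (by simp) y).hasFDerivAt)
    (((hv.fderiv_right (m := (⊤ : ℕ∞)) (by simp)).differentiable (by simp) z).hasFDerivAt) a b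

lemma fderiv_inner_apply' (hv : ContDiff ℝ (⊤ : ℕ∞) v) (z a b : ℝ × ℝ) :
    fderiv ℝ (fun w => fderiv ℝ v w a) z b = fderiv ℝ (fderiv ℝ v) z b a := by
  have hF : HasFDerivAt (fderiv ℝ v) (fderiv ℝ (fderiv ℝ v) z) z :=
    ((hv.fderiv_right (m := (⊤ : ℕ∞)) (by simp)).differentiable (by simp) z).hasFDerivAt
  have h1 : HasFDerivAt (fun w => fderiv ℝ v w a)
      ((fderiv ℝ v z).comp (0 : (ℝ×ℝ) →L[ℝ] (ℝ×ℝ)) + (fderiv ℝ (fderiv ℝ v) z).flip a) z :=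
    hF.clm_apply (hasFDerivAt_const a z)
  rw [h1.fderiv]
  simp [ContinuousLinearMap.flip_apply]

end Calc

set_option maxHeartbeats 2000000 in
/-- the expected frequency under rare mutations dominates the
quasispecies dynamics: `Y(t) ≤ u(x,t) ≤ 1`. -/
theorem stmt_4 (f0 f1 g0 g1 l0 l1 s m0 m1 : ℝ) (u : ℝ → ℝ → ℝ)
    (hf : f1 < f0) (hf1 : 0 ≤ f1) (hs : s = f0 - f1)
    (hg0 : g0 ∈ Set.Ioc (0:ℝ) 1) (hg1 : g1 ∈ Set.Ioc (0:ℝ) 1)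
    (hl0 : 0 ≤ l0) (hl1 : 0 ≤ l1)
    (hm0 : m0 = l0 * g0) (hm1 : m1 = l1 * g1)
    (hu_smooth : ContDiff ℝ (⊤ : ℕ∞) (Function.uncurry u))
    (hu_pde : ∀ x ∈ Set.Icc (0:ℝ) 1, ∀ t > (0:ℝ),
      deriv (fun τ => u x τ) t + s * (1 - x) * x * deriv (fun y => u y t) x
        = l0 * f0 * (u (x + g0 * (1 - x)) t - u x t)
          + l1 * f1 * (u (x - g1 * x) t - u x t))
    (hu_init : ∀ x ∈ Set.Icc (0:ℝ) 1, u x 0 = x)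
    (x : ℝ) (hx : x ∈ Set.Icc (0:ℝ) 1)
    (Y : ℝ → ℝ) (hY0 : Y 0 = x)
    (hY : ∀ t ≥ (0:ℝ), HasDerivAt Y
      (-s * Y t * (1 - Y t) + m0 * f0 * (1 - Y t) - m1 * f1 * Y t) t) :
    ∀ t ≥ (0:ℝ), Y t ≤ u x t ∧ u x t ≤ 1 := by
  obtain ⟨hg0p, hg0le⟩ := hg0
  obtain ⟨hg1p, hg1le⟩ := hg1
  have hf0 : 0 < f0 := lt_of_le_of_lt hf1 hf
  have hsp : 0 < s := by rw [hs]; linarith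
  have hl0f0 : 0 ≤ l0 * f0 := mul_nonneg hl0 hf0.le
  have hl1f1 : 0 ≤ l1 * f1 := mul_nonneg hl1 hf1
  -- basic derived functions
  set U : ℝ × ℝ → ℝ := Function.uncurry u with hUdef
  have hU : ContDiff ℝ (⊤ : ℕ∞) U := hu_smooth
  set Q : ℝ × ℝ → ℝ := fun z => fderiv ℝ U z (1, 0) with hQdef
  set Ut : ℝ × ℝ → ℝ := fun z => fderiv ℝ U z (0, 1) with hUtdef
  have hQ : ContDiff ℝ (⊤ : ℕ∞) Q := (hU.fderiv_right (by simp)).clm_apply contDiff_const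
  have hUt : ContDiff ℝ (⊤ : ℕ∞) Ut := (hU.fderiv_right (by simp)).clm_apply contDiff_const
  set P : ℝ × ℝ → ℝ := fun z => fderiv ℝ Q z (1, 0) with hPdef
  set Qt : ℝ × ℝ → ℝ := fun z => fderiv ℝ Q z (0, 1) with hQtdef
  have hP : ContDiff ℝ (⊤ : ℕ∞) P := (hQ.fderiv_right (by simp)).clm_apply contDiff_const
  have hQt : ContDiff ℝ (⊤ : ℕ∞) Qt := (hQ.fderiv_right (by simp)).clm_apply contDiff_const
  set Px : ℝ × ℝ → ℝ := fun z => fderiv ℝ P z (1, 0) with hPxdef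
  set Pt : ℝ × ℝ → ℝ := fun z => fderiv ℝ P z (0, 1) with hPtdef
  have hPx : ContDiff ℝ (⊤ : ℕ∞) Px := (hP.fderiv_right (by simp)).clm_apply contDiff_const
  have hPt : ContDiff ℝ (⊤ : ℕ∞) Pt := (hP.fderiv_right (by simp)).clm_apply contDiff_const
  -- slice derivatives
  have bx : ∀ x t : ℝ, HasDerivAt (fun y => u y t) (Q (x, t)) x := fun x t => slice_x hU x t
  have bt : ∀ x t : ℝ, HasDerivAt (fun τ => u x τ) (Ut (x, t)) t := fun x t => slice_t hU x t
  have bqx : ∀ x t : ℝ, HasDerivAt (fun y => Q (y, t)) (P (x, t)) x := fun x t => slice_x hQ x t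
  have bqt : ∀ x t : ℝ, HasDerivAt (fun τ => Q (x, τ)) (Qt (x, t)) t := fun x t => slice_t hQ x t
  have bpx : ∀ x t : ℝ, HasDerivAt (fun y => P (y, t)) (Px (x, t)) x := fun x t => slice_x hP x t
  have bpt : ∀ x t : ℝ, HasDerivAt (fun τ => P (x, τ)) (Pt (x, t)) t := fun x t => slice_t hP x t
  -- mixed second derivatives (Schwarz)
  have butx : ∀ x t : ℝ, HasDerivAt (fun y => Ut (y, t)) (Qt (x, t)) x := by
    intro x t
    have h := slice_x hUt x t
    have e : fderiv ℝ Ut (x, t) (1, 0) = Qt (x, t) := by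
      calc fderiv ℝ Ut (x, t) (1, 0)
          = fderiv ℝ (fderiv ℝ U) (x, t) (1, 0) (0, 1) := fderiv_inner_apply' hU (x, t) (0,1) (1,0)
        _ = fderiv ℝ (fderiv ℝ U) (x, t) (0, 1) (1, 0) := second_symm hU (x, t) _ _
        _ = Qt (x, t) := (fderiv_inner_apply' hU (x, t) (1,0) (0,1)).symm
    exact e ▸ h
  have bqtx : ∀ x t : ℝ, HasDerivAt (fun y => Qt (y, t)) (Pt (x, t)) x := by
    intro x t
    have h := slice_x hQt x t
    have e : fderiv ℝ Qt (x, t) (1, 0) = Pt (x, t) := by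
      calc fderiv ℝ Qt (x, t) (1, 0)
          = fderiv ℝ (fderiv ℝ Q) (x, t) (1, 0) (0, 1) := fderiv_inner_apply' hQ (x, t) (0,1) (1,0)
        _ = fderiv ℝ (fderiv ℝ Q) (x, t) (0, 1) (1, 0) := second_symm hQ (x, t) _ _
        _ = Pt (x, t) := (fderiv_inner_apply' hQ (x, t) (1,0) (0,1)).symm
    exact e ▸ h
  -- jump compositions
  have hc0 : ∀ x : ℝ, HasDerivAt (fun y : ℝ => y + g0 * (1 - y)) (1 - g0) x := by
    intro x
    have := (hasDerivAt_id x).add (((hasDerivAt_const x (1:ℝ)).sub (hasDerivAt_id x)).const_mul g0)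
    exact this.congr_deriv (by ring)
  have hc1 : ∀ x : ℝ, HasDerivAt (fun y : ℝ => y - g1 * y) (1 - g1) x := by
    intro x
    have := (hasDerivAt_id x).sub ((hasDerivAt_id x).const_mul g1)
    exact this.congr_deriv (by ring)
  have bj0 : ∀ x t : ℝ, HasDerivAt (fun y => u (y + g0 * (1 - y)) t)
      ((1 - g0) * Q (x + g0 * (1 - x), t)) x := fun x t => slice_line hU x t (hc0 x)
  have bj1 : ∀ x t : ℝ, HasDerivAt (fun y => u (y - g1 * y) t)
      ((1 - g1) * Q (x - g1 * x, t)) x := fun x t => slice_line hU x t (hc1 x)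
  have bjq0 : ∀ x t : ℝ, HasDerivAt (fun y => Q (y + g0 * (1 - y), t))
      ((1 - g0) * P (x + g0 * (1 - x), t)) x := fun x t => slice_line hQ x t (hc0 x)
  have bjq1 : ∀ x t : ℝ, HasDerivAt (fun y => Q (y - g1 * y, t))
      ((1 - g1) * P (x - g1 * x, t)) x := fun x t => slice_line hQ x t (hc1 x)
  -- jump targets stay in [0,1]
  have hmem0 : ∀ y ∈ Icc (0:ℝ) 1, y + g0 * (1 - y) ∈ Icc (0:ℝ) 1 := by
    intro y hy
    constructor
    · nlinarith [hy.1, hy.2]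
    · nlinarith [hy.1, hy.2]
  have hmem1 : ∀ y ∈ Icc (0:ℝ) 1, y - g1 * y ∈ Icc (0:ℝ) 1 := by
    intro y hy
    constructor
    · nlinarith [hy.1, hy.2]
    · nlinarith [hy.1, hy.2]
  -- PDE in terms of Ut, Q
  have pde0 : ∀ x ∈ Icc (0:ℝ) 1, ∀ t > (0:ℝ),
      Ut (x, t) + s * (1 - x) * x * Q (x, t)
        = l0 * f0 * (u (x + g0 * (1 - x)) t - u x t)
          + l1 * f1 * (u (x - g1 * x) t - u x t) := by
    intro x hx t ht
    have h := hu_pde x hx t ht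
    rwa [(bt x t).deriv, (bx x t).deriv] at h
  -- continuity of slices
  have contS : ∀ (v : ℝ × ℝ → ℝ), Continuous v → ∀ t : ℝ, Continuous (fun y => v (y, t)) :=
    fun v hv t => hv.comp (continuous_id.prodMk continuous_const)
  have hcj0 : Continuous (fun y : ℝ => y + g0 * (1 - y)) :=
    continuous_id.add (continuous_const.mul (continuous_const.sub continuous_id))
  have hcj1 : Continuous (fun y : ℝ => y - g1 * y) :=
    continuous_id.sub (continuous_const.mul continuous_id)
  have contJ0 : ∀ (v : ℝ × ℝ → ℝ), Continuous v → ∀ t : ℝ,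
      Continuous (fun y => v (y + g0 * (1 - y), t)) :=
    fun v hv t => hv.comp (hcj0.prodMk continuous_const)
  have contJ1 : ∀ (v : ℝ × ℝ → ℝ), Continuous v → ∀ t : ℝ,
      Continuous (fun y => v (y - g1 * y, t)) :=
    fun v hv t => hv.comp (hcj1.prodMk continuous_const)
  -- helper to extend an identity from (0,1) to [0,1] by continuity
  have extend : ∀ (F G : ℝ → ℝ), Continuous F → Continuous G →
      (∀ y ∈ Ioo (0:ℝ) 1, F y = G y) → ∀ y ∈ Icc (0:ℝ) 1, F y = G y := by
    intro F G hF hG hIoo y hy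
    rcases eq_or_lt_of_le hy.1 with he | hl
    · rw [← he]
      refine eq_on_filter (𝓝[>] (0:ℝ)) nhdsWithin_le_nhds hF.continuousAt hG.continuousAt ?_
      filter_upwards [Ioo_mem_nhdsGT_of_mem (Set.mem_Ico.2 ⟨le_refl (0:ℝ), zero_lt_one⟩)]
        with z hz
      exact hIoo z hz
    rcases eq_or_lt_of_le hy.2 with he | hr
    · rw [he]
      refine eq_on_filter (𝓝[<] (1:ℝ)) nhdsWithin_le_nhds hF.continuousAt hG.continuousAt ?_
      filter_upwards [Ioo_mem_nhdsLT_of_mem (Set.mem_Ioc.2 ⟨zero_lt_one, le_refl (1:ℝ)⟩)]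
        with z hz
      exact hIoo z hz
    exact hIoo y ⟨hl, hr⟩
  -- first differentiated PDE
  have hpoly : ∀ x : ℝ, HasDerivAt (fun y : ℝ => s * (1 - y) * y) (s * (1 - 2*x)) x := by
    intro x
    have := (((hasDerivAt_const x (1:ℝ)).sub (hasDerivAt_id x)).const_mul s).mul
      (hasDerivAt_id x)
    simp only [id_eq] at this
    exact this.congr_deriv (by simp only [Pi.sub_apply, id_eq]; ring)
  have pde1 : ∀ t > (0:ℝ), ∀ x ∈ Icc (0:ℝ) 1,
      Qt (x, t) + s * (1 - 2*x) * Q (x, t) + s * (1 - x) * x * P (x, t)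
        = l0 * f0 * ((1 - g0) * Q (x + g0 * (1 - x), t) - Q (x, t))
          + l1 * f1 * ((1 - g1) * Q (x - g1 * x, t) - Q (x, t)) := by
    intro t ht
    have hIoo : ∀ x ∈ Ioo (0:ℝ) 1,
        (fun y => Qt (y, t) + s * (1 - 2*y) * Q (y, t) + s * (1 - y) * y * P (y, t)) x
          = (fun y => l0 * f0 * ((1 - g0) * Q (y + g0 * (1 - y), t) - Q (y, t))
              + l1 * f1 * ((1 - g1) * Q (y - g1 * y, t) - Q (y, t))) x := by
      intro x hxI
      have hev : (fun y => Ut (y, t) + s * (1 - y) * y * Q (y, t)) =ᶠ[𝓝 x]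
          (fun y => l0 * f0 * (u (y + g0 * (1 - y)) t - u y t)
            + l1 * f1 * (u (y - g1 * y) t - u y t)) := by
        filter_upwards [Icc_mem_nhds hxI.1 hxI.2] with y hy
        exact pde0 y hy t ht
      have hdeq := hev.deriv_eq
      have hL : HasDerivAt (fun y => Ut (y, t) + s * (1 - y) * y * Q (y, t))
          (Qt (x, t) + (s * (1 - 2*x) * Q (x, t) + s * (1 - x) * x * P (x, t))) x :=
        (butx x t).add ((hpoly x).mul (bqx x t))
      have hR : HasDerivAt (fun y => l0 * f0 * (u (y + g0 * (1 - y)) t - u y t)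
            + l1 * f1 * (u (y - g1 * y) t - u y t))
          (l0 * f0 * ((1 - g0) * Q (x + g0 * (1 - x), t) - Q (x, t))
            + l1 * f1 * ((1 - g1) * Q (x - g1 * x, t) - Q (x, t))) x :=
        (((bj0 x t).sub (bx x t)).const_mul (l0 * f0)).add
          (((bj1 x t).sub (bx x t)).const_mul (l1 * f1))
      rw [hL.deriv, hR.deriv] at hdeq
      simp only []
      linarith
    intro x hxI
    exact extend
      (fun y => Qt (y, t) + s * (1 - 2*y) * Q (y, t) + s * (1 - y) * y * P (y, t))
      (fun y => l0 * f0 * ((1 - g0) * Q (y + g0 * (1 - y), t) - Q (y, t))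
        + l1 * f1 * ((1 - g1) * Q (y - g1 * y, t) - Q (y, t)))
      (((contS Qt hQt.continuous t).add
          ((continuous_const.mul (continuous_const.sub (continuous_const.mul
              continuous_id))).mul (contS Q hQ.continuous t))).add
        (((continuous_const.mul (continuous_const.sub continuous_id)).mul continuous_id).mul
          (contS P hP.continuous t)))
      ((continuous_const.mul ((continuous_const.mul (contJ0 Q hQ.continuous t)).sub
          (contS Q hQ.continuous t))).add
        (continuous_const.mul ((continuous_const.mul (contJ1 Q hQ.continuous t)).sub
          (contS Q hQ.continuous t))))
      hIoo x hxI
  -- second differentiated PDE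
  have hA2 : ∀ x : ℝ, HasDerivAt (fun y : ℝ => s * (1 - 2*y)) (-(2*s)) x := by
    intro x
    have := ((hasDerivAt_const x (1:ℝ)).sub ((hasDerivAt_id x).const_mul 2)).const_mul s
    simp only [id_eq] at this
    exact this.congr_deriv (by ring)
  have pde2 : ∀ t > (0:ℝ), ∀ x ∈ Icc (0:ℝ) 1,
      Pt (x, t) + ((-(2*s)) * Q (x, t) + s * (1 - 2*x) * P (x, t))
          + (s * (1 - 2*x) * P (x, t) + s * (1 - x) * x * Px (x, t))
        = l0 * f0 * ((1 - g0) * ((1 - g0) * P (x + g0 * (1 - x), t)) - P (x, t))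
          + l1 * f1 * ((1 - g1) * ((1 - g1) * P (x - g1 * x, t)) - P (x, t)) := by
    intro t ht
    have hIoo : ∀ x ∈ Ioo (0:ℝ) 1,
        (fun y => Pt (y, t) + ((-(2*s)) * Q (y, t) + s * (1 - 2*y) * P (y, t))
            + (s * (1 - 2*y) * P (y, t) + s * (1 - y) * y * Px (y, t))) x
          = (fun y => l0 * f0 * ((1 - g0) * ((1 - g0) * P (y + g0 * (1 - y), t)) - P (y, t))
              + l1 * f1 * ((1 - g1) * ((1 - g1) * P (y - g1 * y, t)) - P (y, t))) x := by
      intro x hxI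
      have hev : (fun y => Qt (y, t) + s * (1 - 2*y) * Q (y, t) + s * (1 - y) * y * P (y, t))
          =ᶠ[𝓝 x]
          (fun y => l0 * f0 * ((1 - g0) * Q (y + g0 * (1 - y), t) - Q (y, t))
            + l1 * f1 * ((1 - g1) * Q (y - g1 * y, t) - Q (y, t))) := by
        filter_upwards [Icc_mem_nhds hxI.1 hxI.2] with y hy
        exact pde1 t ht y hy
      have hdeq := hev.deriv_eq
      have hL : HasDerivAt
          (fun y => Qt (y, t) + s * (1 - 2*y) * Q (y, t) + s * (1 - y) * y * P (y, t))
          (Pt (x, t) + ((-(2*s)) * Q (x, t) + s * (1 - 2*x) * P (x, t))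
            + (s * (1 - 2*x) * P (x, t) + s * (1 - x) * x * Px (x, t))) x :=
        ((bqtx x t).add ((hA2 x).mul (bqx x t))).add ((hpoly x).mul (bpx x t))
      have hR : HasDerivAt
          (fun y => l0 * f0 * ((1 - g0) * Q (y + g0 * (1 - y), t) - Q (y, t))
            + l1 * f1 * ((1 - g1) * Q (y - g1 * y, t) - Q (y, t)))
          (l0 * f0 * ((1 - g0) * ((1 - g0) * P (x + g0 * (1 - x), t)) - P (x, t))
            + l1 * f1 * ((1 - g1) * ((1 - g1) * P (x - g1 * x, t)) - P (x, t))) x :=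
        ((((bjq0 x t).const_mul (1 - g0)).sub (bqx x t)).const_mul (l0 * f0)).add
          ((((bjq1 x t).const_mul (1 - g1)).sub (bqx x t)).const_mul (l1 * f1))
      rw [hL.deriv, hR.deriv] at hdeq
      exact hdeq
    intro x hxI
    exact extend
      (fun y => Pt (y, t) + ((-(2*s)) * Q (y, t) + s * (1 - 2*y) * P (y, t))
          + (s * (1 - 2*y) * P (y, t) + s * (1 - y) * y * Px (y, t)))
      (fun y => l0 * f0 * ((1 - g0) * ((1 - g0) * P (y + g0 * (1 - y), t)) - P (y, t))
          + l1 * f1 * ((1 - g1) * ((1 - g1) * P (y - g1 * y, t)) - P (y, t)))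
      (((contS Pt hPt.continuous t).add
          ((continuous_const.mul (contS Q hQ.continuous t)).add
            ((continuous_const.mul (continuous_const.sub (continuous_const.mul
                continuous_id))).mul (contS P hP.continuous t)))).add
        (((continuous_const.mul (continuous_const.sub (continuous_const.mul
              continuous_id))).mul (contS P hP.continuous t)).add
          (((continuous_const.mul (continuous_const.sub continuous_id)).mul
              continuous_id).mul (contS Px hPx.continuous t))))
      ((continuous_const.mul ((continuous_const.mul (continuous_const.mul
            (contJ0 P hP.continuous t))).sub (contS P hP.continuous t))).add
        (continuous_const.mul ((continuous_const.mul (continuous_const.mul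
            (contJ1 P hP.continuous t))).sub (contS P hP.continuous t))))
      hIoo x hxI
  -- derivatives at time 0 via the initial condition
  have derivInit : ∀ (f g : ℝ → ℝ) (y : ℝ), y ∈ Icc (0:ℝ) 1 → DifferentiableAt ℝ f y →
      DifferentiableAt ℝ g y → (∀ z ∈ Icc (0:ℝ) 1, f z = g z) → deriv f y = deriv g y := by
    intro f g y hy hf hg hfg
    rcases lt_or_eq_of_le hy.2 with hr | he
    · refine deriv_eq_on_filter (𝓝[>] y)
        (nhdsWithin_mono y (fun z hz => Set.mem_compl_singleton_iff.2 (ne_of_gt hz))) hf hg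
        ?_ (hfg y hy)
      filter_upwards [Ioo_mem_nhdsGT_of_mem (Set.mem_Ico.2 ⟨le_refl y, hr⟩)] with z hz
      exact hfg z ⟨hy.1.trans hz.1.le, hz.2.le⟩
    · refine deriv_eq_on_filter (𝓝[<] y)
        (nhdsWithin_mono y (fun z hz => Set.mem_compl_singleton_iff.2 (ne_of_lt hz))) hf hg
        ?_ (hfg y hy)
      have h01 : Ioo (0:ℝ) 1 ∈ 𝓝[<] y := by
        rw [he]
        exact Ioo_mem_nhdsLT_of_mem (Set.mem_Ioc.2 ⟨zero_lt_one, le_refl 1⟩)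
      filter_upwards [h01] with z hz
      exact hfg z ⟨hz.1.le, hz.2.le⟩
  have qinit : ∀ y ∈ Icc (0:ℝ) 1, Q (y, 0) = 1 := by
    intro y hy
    have h := derivInit (fun z => u z 0) id y hy (bx y 0).differentiableAt differentiableAt_id
      (fun z hz => hu_init z hz)
    rw [(bx y 0).deriv, deriv_id] at h
    exact h
  have pinit : ∀ y ∈ Icc (0:ℝ) 1, P (y, 0) = 0 := by
    intro y hy
    have h := derivInit (fun z => Q (z, 0)) (fun _ => (1:ℝ)) y hy (bqx y 0).differentiableAt
      (differentiableAt_const 1) (fun z hz => qinit z hz)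
    rw [(bqx y 0).deriv, deriv_const] at h
    exact h
  -- upper bound u ≤ 1
  have ubound : ∀ y ∈ Icc (0:ℝ) 1, ∀ t ≥ (0:ℝ), u y t ≤ 1 := by
    intro y hy t htge
    set w1 : ℝ → ℝ → ℝ := fun a b => Real.exp (-b) * (1 - u a b) with hw1def
    have hw1t : ∀ a b : ℝ, HasDerivAt (w1 a)
        (Real.exp (-b) * (-1) * (1 - u a b) + Real.exp (-b) * (0 - Ut (a, b))) b :=
      fun a b => ((hasDerivAt_neg b).exp).mul ((hasDerivAt_const b (1:ℝ)).sub (bt a b))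
    have hw1x : ∀ a b : ℝ, HasDerivAt (fun z => w1 z b)
        (Real.exp (-b) * (0 - Q (a, b))) a :=
      fun a b => ((hasDerivAt_const a (1:ℝ)).sub (bx a b)).const_mul (Real.exp (-b))
    have hmp := min_principle_s4 w1 (t+1) (by linarith)
      ((Real.continuous_exp.comp continuous_snd.neg).mul
        (continuous_const.sub hU.continuous))
      (fun a b => (hw1t a b).differentiableAt)
      (fun a b => (hw1x a b).differentiableAt)
      (fun a ha => by
        have h1 := hu_init a ha
        have h2 : (0:ℝ) < Real.exp (-(0:ℝ)) := Real.exp_pos _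
        have : w1 a 0 = Real.exp (-(0:ℝ)) * (1 - u a 0) := rfl
        rw [this, h1]
        nlinarith [ha.2])
      ?_
    · have := hmp y hy t ⟨htge, by linarith⟩
      have hexp : (0:ℝ) < Real.exp (-t) := Real.exp_pos _
      have hw : w1 y t = Real.exp (-t) * (1 - u y t) := rfl
      rw [hw] at this
      nlinarith
    · intro x0 hx0 t0 ht0 hmin hneg ht hxd
      have hexp0 : (0:ℝ) < Real.exp (-t0) := Real.exp_pos _
      have hne : Real.exp (-t0) ≠ 0 := hexp0.ne'
      have hneg' : Real.exp (-t0) * (1 - u x0 t0) < 0 := hneg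
      have hu0 : 1 < u x0 t0 := by nlinarith [hneg']
      rw [(hw1t x0 t0).deriv] at ht
      rw [(hw1x x0 t0).deriv] at hxd
      have hq0 : s * (1 - x0) * x0 * Q (x0, t0) = 0 := by
        have h2 : Real.exp (-t0) * (s * ((1 - x0) * x0 * Q (x0, t0))) = 0 := by
          linear_combination (-s) * hxd
        rcases mul_eq_zero.1 h2 with h | h
        · exact absurd h hne
        · linear_combination h
      have hp := pde0 x0 hx0 t0 ht0.1
      have hmem0' := hmem0 x0 hx0
      have hmem1' := hmem1 x0 hx0
      have hj0 : u (x0 + g0 * (1 - x0)) t0 ≤ u x0 t0 := by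
        have := hmin _ hmem0' t0 ⟨ht0.1.le, ht0.2⟩
        have hww : w1 x0 t0 ≤ w1 (x0 + g0 * (1 - x0)) t0 := this
        have h1 : Real.exp (-t0) * (1 - u x0 t0)
            ≤ Real.exp (-t0) * (1 - u (x0 + g0 * (1 - x0)) t0) := hww
        nlinarith
      have hj1 : u (x0 - g1 * x0) t0 ≤ u x0 t0 := by
        have := hmin _ hmem1' t0 ⟨ht0.1.le, ht0.2⟩
        have h1 : Real.exp (-t0) * (1 - u x0 t0)
            ≤ Real.exp (-t0) * (1 - u (x0 - g1 * x0) t0) := this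
        nlinarith
      -- PDE gives Ut ≤ 0, time-minimality gives Ut > 0
      have hUtle : Ut (x0, t0) ≤ 0 := by
        have h1 : l0 * f0 * (u (x0 + g0 * (1 - x0)) t0 - u x0 t0) ≤ 0 :=
          mul_nonpos_of_nonneg_of_nonpos hl0f0 (by linarith)
        have h2 : l1 * f1 * (u (x0 - g1 * x0) t0 - u x0 t0) ≤ 0 :=
          mul_nonpos_of_nonneg_of_nonpos hl1f1 (by linarith)
        nlinarith [hp, hq0]
      have hUtgt : 0 < Ut (x0, t0) := by nlinarith [ht]
      linarith
  -- monotonicity: Q ≥ 0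
  have qbound : ∀ y ∈ Icc (0:ℝ) 1, ∀ t ≥ (0:ℝ), 0 ≤ Q (y, t) := by
    intro y hy t htge
    set w2 : ℝ → ℝ → ℝ := fun a b => Real.exp (-((s+1)*b)) * Q (a, b) with hw2def
    have hlin : ∀ b : ℝ, HasDerivAt (fun b : ℝ => -((s+1)*b)) (-(s+1)) b := by
      intro b
      simpa using ((hasDerivAt_id b).const_mul (s+1)).fun_neg
    have hw2t : ∀ a b : ℝ, HasDerivAt (w2 a)
        (Real.exp (-((s+1)*b)) * (-(s+1)) * Q (a, b)
          + Real.exp (-((s+1)*b)) * Qt (a, b)) b :=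
      fun a b => ((hlin b).exp).mul (bqt a b)
    have hw2x : ∀ a b : ℝ, HasDerivAt (fun z => w2 z b)
        (Real.exp (-((s+1)*b)) * P (a, b)) a :=
      fun a b => (bqx a b).const_mul (Real.exp (-((s+1)*b)))
    have hmp := min_principle_s4 w2 (t+1) (by linarith)
      ((Real.continuous_exp.comp ((continuous_const.mul continuous_snd).neg)).mul
        hQ.continuous)
      (fun a b => (hw2t a b).differentiableAt)
      (fun a b => (hw2x a b).differentiableAt)
      (fun a ha => by
        have h1 := qinit a ha
        have h2 : w2 a 0 = Real.exp (-((s+1)*0)) * Q (a, 0) := rfl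
        rw [h2, h1]
        positivity)
      ?_
    · have h := hmp y hy t ⟨htge, by linarith⟩
      have hw : w2 y t = Real.exp (-((s+1)*t)) * Q (y, t) := rfl
      rw [hw] at h
      have hexp : (0:ℝ) < Real.exp (-((s+1)*t)) := Real.exp_pos _
      nlinarith
    · intro x0 hx0 t0 ht0 hmin hneg ht hxd
      have hexp0 : (0:ℝ) < Real.exp (-((s+1)*t0)) := Real.exp_pos _
      have hne : Real.exp (-((s+1)*t0)) ≠ 0 := hexp0.ne'
      have hneg' : Real.exp (-((s+1)*t0)) * Q (x0, t0) < 0 := hneg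
      have hQ0 : Q (x0, t0) < 0 := by nlinarith
      rw [(hw2t x0 t0).deriv] at ht
      rw [(hw2x x0 t0).deriv] at hxd
      -- time direction : Qt0 ≤ (s+1) Q0
      have hQt0 : Qt (x0, t0) ≤ (s+1) * Q (x0, t0) := by nlinarith [ht]
      -- spatial term vanishes
      have hp0 : s * (1 - x0) * x0 * P (x0, t0) = 0 := by
        have h2 : Real.exp (-((s+1)*t0)) * (s * ((1 - x0) * x0 * P (x0, t0))) = 0 := by
          linear_combination s * hxd
        rcases mul_eq_zero.1 h2 with h | h
        · exact absurd h hne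
        · linear_combination h
      have hp := pde1 t0 ht0.1 x0 hx0
      have hmem0' := hmem0 x0 hx0
      have hmem1' := hmem1 x0 hx0
      have hj0 : Q (x0, t0) ≤ Q (x0 + g0 * (1 - x0), t0) := by
        have h1 : Real.exp (-((s+1)*t0)) * Q (x0, t0)
            ≤ Real.exp (-((s+1)*t0)) * Q (x0 + g0 * (1 - x0), t0) :=
          hmin _ hmem0' t0 ⟨ht0.1.le, ht0.2⟩
        nlinarith
      have hj1 : Q (x0, t0) ≤ Q (x0 - g1 * x0, t0) := by
        have h1 : Real.exp (-((s+1)*t0)) * Q (x0, t0)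
            ≤ Real.exp (-((s+1)*t0)) * Q (x0 - g1 * x0, t0) :=
          hmin _ hmem1' t0 ⟨ht0.1.le, ht0.2⟩
        nlinarith
      -- jump terms are bounded below
      have hjump0 : l0 * f0 * ((1 - g0) * Q (x0 + g0 * (1 - x0), t0) - Q (x0, t0))
          ≥ l0 * f0 * (-(g0 * Q (x0, t0))) := by
        have h1 : (1 - g0) * Q (x0 + g0 * (1 - x0), t0) ≥ (1 - g0) * Q (x0, t0) :=
          mul_le_mul_of_nonneg_left hj0 (by linarith)
        have h2 : (1 - g0) * Q (x0 + g0 * (1 - x0), t0) - Q (x0, t0) ≥ -(g0 * Q (x0, t0)) := by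
          nlinarith
        exact mul_le_mul_of_nonneg_left h2 hl0f0
      have hjump1 : l1 * f1 * ((1 - g1) * Q (x0 - g1 * x0, t0) - Q (x0, t0))
          ≥ l1 * f1 * (-(g1 * Q (x0, t0))) := by
        have h1 : (1 - g1) * Q (x0 - g1 * x0, t0) ≥ (1 - g1) * Q (x0, t0) :=
          mul_le_mul_of_nonneg_left hj1 (by linarith)
        have h2 : (1 - g1) * Q (x0 - g1 * x0, t0) - Q (x0, t0) ≥ -(g1 * Q (x0, t0)) := by
          nlinarith
        exact mul_le_mul_of_nonneg_left h2 hl1f1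
      have hrhs0 : 0 ≤ l0 * f0 * (-(g0 * Q (x0, t0))) := by
        apply mul_nonneg hl0f0
        nlinarith
      have hrhs1 : 0 ≤ l1 * f1 * (-(g1 * Q (x0, t0))) := by
        apply mul_nonneg hl1f1
        nlinarith
      -- hence Qt0 ≥ -s(1-2x0) Q0 ≥ s Q0
      have hlow : s * Q (x0, t0) ≤ Qt (x0, t0) := by
        have h1 : -(s * (1 - 2*x0)) * Q (x0, t0) ≥ s * Q (x0, t0) := by
          nlinarith [mul_nonneg (mul_nonneg hsp.le (by linarith [hx0.2] : (0:ℝ) ≤ 1 - x0))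
            (by linarith : (0:ℝ) ≤ -Q (x0, t0))]
        nlinarith [hp, hp0]
      nlinarith [hlow, hQt0, hQ0]
  -- convexity: P ≥ 0
  have pbound : ∀ y ∈ Icc (0:ℝ) 1, ∀ t ≥ (0:ℝ), 0 ≤ P (y, t) := by
    intro y hy t htge
    set w3 : ℝ → ℝ → ℝ := fun a b => Real.exp (-((2*s+1)*b)) * P (a, b) with hw3def
    have hlin : ∀ b : ℝ, HasDerivAt (fun b : ℝ => -((2*s+1)*b)) (-(2*s+1)) b := by
      intro b
      simpa using ((hasDerivAt_id b).const_mul (2*s+1)).fun_neg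
    have hw3t : ∀ a b : ℝ, HasDerivAt (w3 a)
        (Real.exp (-((2*s+1)*b)) * (-(2*s+1)) * P (a, b)
          + Real.exp (-((2*s+1)*b)) * Pt (a, b)) b :=
      fun a b => ((hlin b).exp).mul (bpt a b)
    have hw3x : ∀ a b : ℝ, HasDerivAt (fun z => w3 z b)
        (Real.exp (-((2*s+1)*b)) * Px (a, b)) a :=
      fun a b => (bpx a b).const_mul (Real.exp (-((2*s+1)*b)))
    have hmp := min_principle_s4 w3 (t+1) (by linarith)
      ((Real.continuous_exp.comp ((continuous_const.mul continuous_snd).neg)).mul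
        hP.continuous)
      (fun a b => (hw3t a b).differentiableAt)
      (fun a b => (hw3x a b).differentiableAt)
      (fun a ha => by
        have h1 := pinit a ha
        have h2 : w3 a 0 = Real.exp (-((2*s+1)*0)) * P (a, 0) := rfl
        rw [h2, h1]
        simp)
      ?_
    · have h := hmp y hy t ⟨htge, by linarith⟩
      have hw : w3 y t = Real.exp (-((2*s+1)*t)) * P (y, t) := rfl
      rw [hw] at h
      have hexp : (0:ℝ) < Real.exp (-((2*s+1)*t)) := Real.exp_pos _
      nlinarith
    · intro x0 hx0 t0 ht0 hmin hneg ht hxd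
      have hexp0 : (0:ℝ) < Real.exp (-((2*s+1)*t0)) := Real.exp_pos _
      have hne : Real.exp (-((2*s+1)*t0)) ≠ 0 := hexp0.ne'
      have hneg' : Real.exp (-((2*s+1)*t0)) * P (x0, t0) < 0 := hneg
      have hP0 : P (x0, t0) < 0 := by nlinarith
      rw [(hw3t x0 t0).deriv] at ht
      rw [(hw3x x0 t0).deriv] at hxd
      have hPt0 : Pt (x0, t0) ≤ (2*s+1) * P (x0, t0) := by nlinarith [ht]
      have hpx0 : s * (1 - x0) * x0 * Px (x0, t0) = 0 := by
        have h2 : Real.exp (-((2*s+1)*t0)) * (s * ((1 - x0) * x0 * Px (x0, t0))) = 0 := by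
          linear_combination s * hxd
        rcases mul_eq_zero.1 h2 with h | h
        · exact absurd h hne
        · linear_combination h
      have hp := pde2 t0 ht0.1 x0 hx0
      have hj0 : P (x0, t0) ≤ P (x0 + g0 * (1 - x0), t0) := by
        have h1 : Real.exp (-((2*s+1)*t0)) * P (x0, t0)
            ≤ Real.exp (-((2*s+1)*t0)) * P (x0 + g0 * (1 - x0), t0) :=
          hmin _ (hmem0 x0 hx0) t0 ⟨ht0.1.le, ht0.2⟩
        nlinarith
      have hj1 : P (x0, t0) ≤ P (x0 - g1 * x0, t0) := by
        have h1 : Real.exp (-((2*s+1)*t0)) * P (x0, t0)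
            ≤ Real.exp (-((2*s+1)*t0)) * P (x0 - g1 * x0, t0) :=
          hmin _ (hmem1 x0 hx0) t0 ⟨ht0.1.le, ht0.2⟩
        nlinarith
      have hq0 : 0 ≤ Q (x0, t0) := qbound x0 hx0 t0 ht0.1.le
      -- jump terms bounded below by ((1-g)^2 - 1) P0 ≥ 0
      have hjump0 : l0 * f0 * ((1 - g0) * ((1 - g0) * P (x0 + g0 * (1 - x0), t0)) - P (x0, t0))
          ≥ 0 := by
        apply mul_nonneg hl0f0
        have h1 : (1 - g0) * ((1 - g0) * P (x0 + g0 * (1 - x0), t0))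
            ≥ (1 - g0) * ((1 - g0) * P (x0, t0)) := by
          apply mul_le_mul_of_nonneg_left _ (by linarith : (0:ℝ) ≤ 1 - g0)
          exact mul_le_mul_of_nonneg_left hj0 (by linarith)
        have h2 : (0:ℝ) ≤ (1 - (1 - g0)^2) * (-P (x0, t0)) :=
          mul_nonneg (by nlinarith) (by linarith)
        nlinarith [h1, h2]
      have hjump1 : l1 * f1 * ((1 - g1) * ((1 - g1) * P (x0 - g1 * x0, t0)) - P (x0, t0))
          ≥ 0 := by
        apply mul_nonneg hl1f1
        have h1 : (1 - g1) * ((1 - g1) * P (x0 - g1 * x0, t0))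
            ≥ (1 - g1) * ((1 - g1) * P (x0, t0)) := by
          apply mul_le_mul_of_nonneg_left _ (by linarith : (0:ℝ) ≤ 1 - g1)
          exact mul_le_mul_of_nonneg_left hj1 (by linarith)
        have h2 : (0:ℝ) ≤ (1 - (1 - g1)^2) * (-P (x0, t0)) :=
          mul_nonneg (by nlinarith) (by linarith)
        nlinarith [h1, h2]
      have hlow : 2 * s * P (x0, t0) ≤ Pt (x0, t0) := by
        have h1 : -(2 * (s * (1 - 2*x0))) * P (x0, t0) ≥ 2 * s * P (x0, t0) := by
          nlinarith [mul_nonneg (mul_nonneg hsp.le (by linarith [hx0.2] : (0:ℝ) ≤ 1 - x0))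
            (by linarith : (0:ℝ) ≤ -P (x0, t0))]
        nlinarith [hp, hpx0, hsp]
      nlinarith [hlow, hPt0, hP0]
  -- the ODE solution stays in [0,1]
  have hm0f0 : 0 ≤ m0 * f0 := by rw [hm0]; positivity
  have hm1f1 : 0 ≤ m1 * f1 := by rw [hm1]; positivity
  have Yle1 : ∀ t ≥ (0:ℝ), Y t ≤ 1 := by
    intro t htge
    have hYcont : ContinuousOn Y (Icc 0 t) := fun τ hτ => ((hY τ hτ.1).continuousAt).continuousWithinAt
    obtain ⟨M, hM⟩ : BddAbove (Y '' Icc 0 t) :=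
      (isCompact_Icc.image_of_continuousOn hYcont).bddAbove
    have hMb : ∀ τ ∈ Icc (0:ℝ) t, Y τ ≤ M := fun τ hτ => hM (Set.mem_image_of_mem Y hτ)
    have key := nonpos_of_deriv_le (g := fun τ => Y τ - 1)
      (G := fun τ => -s * Y τ * (1 - Y τ) + m0 * f0 * (1 - Y τ) - m1 * f1 * Y τ)
      (L := s * M) htge
      (fun τ hτ => (hY τ hτ.1).sub_const 1)
      (by show Y 0 - 1 ≤ 0; rw [hY0]; linarith [hx.2])
      ?_
    · have key' : Y t - 1 ≤ 0 := key
      linarith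
    · intro τ hτ hge
      have hge' : (0:ℝ) ≤ Y τ - 1 := hge
      show -s * Y τ * (1 - Y τ) + m0 * f0 * (1 - Y τ) - m1 * f1 * Y τ ≤ s * M * (Y τ - 1)
      have h1 : Y τ ≤ M := hMb τ hτ
      have h2 : (1:ℝ) ≤ Y τ := by linarith
      have h3 : 0 ≤ m0 * f0 * (Y τ - 1) := mul_nonneg hm0f0 (by linarith)
      have h4 : 0 ≤ m1 * f1 * Y τ := mul_nonneg hm1f1 (by linarith)
      have h5 : 0 ≤ s * (Y τ - 1) * (M - Y τ) :=
        mul_nonneg (mul_nonneg hsp.le (by linarith)) (by linarith)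
      nlinarith
  have Yge0 : ∀ t ≥ (0:ℝ), 0 ≤ Y t := by
    intro t htge
    have key := nonpos_of_deriv_le (g := fun τ => -Y τ)
      (G := fun τ => -(-s * Y τ * (1 - Y τ) + m0 * f0 * (1 - Y τ) - m1 * f1 * Y τ))
      (L := 0) htge
      (fun τ hτ => (hY τ hτ.1).neg)
      (by show -Y 0 ≤ 0; rw [hY0]; linarith [hx.1])
      ?_
    · have key' : -Y t ≤ 0 := key
      linarith
    · intro τ hτ hge
      have hge' : (0:ℝ) ≤ -Y τ := hge
      show -(-s * Y τ * (1 - Y τ) + m0 * f0 * (1 - Y τ) - m1 * f1 * Y τ) ≤ 0 * (-Y τ)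
      have h1 : Y τ ≤ 0 := by linarith
      have h3 : 0 ≤ m0 * f0 * (1 - Y τ) := mul_nonneg hm0f0 (by linarith)
      have h4 : 0 ≤ -(m1 * f1 * Y τ) := by nlinarith [mul_nonneg hm1f1 hge']
      have h5 : 0 ≤ -s * Y τ * (1 - Y τ) := by
        nlinarith [mul_nonneg (mul_nonneg hsp.le hge') (by linarith : (0:ℝ) ≤ 1 - Y τ)]
      nlinarith
  -- Q is monotone in x (convexity of u)
  have monoQ : ∀ t ≥ (0:ℝ), ∀ a ∈ Icc (0:ℝ) 1, ∀ b ∈ Icc (0:ℝ) 1, a ≤ b →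
      Q (a, t) ≤ Q (b, t) := by
    intro t htge
    have hmono : MonotoneOn (fun y => Q (y, t)) (Icc (0:ℝ) 1) := by
      apply monotoneOn_of_deriv_nonneg (convex_Icc (0:ℝ) 1)
        ((contS Q hQ.continuous t).continuousOn)
      · intro y hy
        exact (bqx y t).differentiableAt.differentiableWithinAt
      · intro y hy
        rw [interior_Icc] at hy
        rw [(bqx y t).deriv]
        exact pbound y ⟨hy.1.le, hy.2.le⟩ t htge
    intro a ha b hb hab
    exact hmono ha hb hab
  -- convexity inequalities for the two jumps
  have convex0 : ∀ a ∈ Icc (0:ℝ) 1, ∀ t ≥ (0:ℝ),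
      g0 * (1 - a) * Q (a, t) ≤ u (a + g0 * (1 - a)) t - u a t := by
    intro a ha t htge
    rcases eq_or_lt_of_le ha.2 with he | hlt
    · rw [← he]
      simp
    · have hδ : 0 < g0 * (1 - a) := mul_pos hg0p (by linarith)
      have hlt2 : a < a + g0 * (1 - a) := by linarith
      obtain ⟨c, hc, hslope⟩ := exists_hasDerivAt_eq_slope (fun y => u y t)
        (fun y => Q (y, t)) hlt2
        (fun y hy => (bx y t).continuousAt.continuousWithinAt)
        (fun y hy => bx y t)
      have hcI : c ∈ Icc (0:ℝ) 1 := by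
        have := hmem0 a ha
        exact ⟨ha.1.trans hc.1.le, hc.2.le.trans this.2⟩
      have hQc : Q (a, t) ≤ Q (c, t) := monoQ t htge a ha c hcI hc.1.le
      have hkey : u (a + g0 * (1 - a)) t - u a t = g0 * (1 - a) * Q (c, t) := by
        rw [hslope, show a + g0 * (1 - a) - a = g0 * (1 - a) by ring]
        field_simp
      rw [hkey]
      exact mul_le_mul_of_nonneg_left hQc hδ.le
  have convex1 : ∀ a ∈ Icc (0:ℝ) 1, ∀ t ≥ (0:ℝ),
      -(g1 * a) * Q (a, t) ≤ u (a - g1 * a) t - u a t := by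
    intro a ha t htge
    rcases eq_or_lt_of_le ha.1 with he | hlt
    · rw [← he]
      simp
    · have hδ : 0 < g1 * a := mul_pos hg1p hlt
      have hlt2 : a - g1 * a < a := by linarith
      obtain ⟨c, hc, hslope⟩ := exists_hasDerivAt_eq_slope (fun y => u y t)
        (fun y => Q (y, t)) hlt2
        (fun y hy => (bx y t).continuousAt.continuousWithinAt)
        (fun y hy => bx y t)
      have hcI : c ∈ Icc (0:ℝ) 1 := by
        have := hmem1 a ha
        exact ⟨this.1.trans hc.1.le, hc.2.le.trans ha.2⟩
      have hQc : Q (c, t) ≤ Q (a, t) := monoQ t htge c hcI a ha hc.2.le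
      have hkey : u a t - u (a - g1 * a) t = g1 * a * Q (c, t) := by
        rw [hslope, show a - (a - g1 * a) = g1 * a by ring]
        field_simp
      have h2 : g1 * a * Q (c, t) ≤ g1 * a * Q (a, t) := mul_le_mul_of_nonneg_left hQc hδ.le
      linarith [hkey]
  -- final assembly
  intro t htge
  refine ⟨?_, ubound x hx t htge⟩
  rcases eq_or_lt_of_le htge with he | htpos
  · rw [← he, hY0, hu_init x hx]
  -- t > 0 : compare along φ τ = u (Y τ) (t - τ)
  set φ : ℝ → ℝ := fun τ => u (Y τ) (t - τ) with hφdef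
  have hφd : ∀ τ ∈ Icc (0:ℝ) t, HasDerivAt φ
      ((-s * Y τ * (1 - Y τ) + m0 * f0 * (1 - Y τ) - m1 * f1 * Y τ) * Q (Y τ, t - τ)
        - Ut (Y τ, t - τ)) τ := by
    intro τ hτ
    have hcurve : HasDerivAt (fun τ => (Y τ, t - τ))
        ((-s * Y τ * (1 - Y τ) + m0 * f0 * (1 - Y τ) - m1 * f1 * Y τ, (0:ℝ) - 1)) τ :=
      (hY τ hτ.1).prodMk ((hasDerivAt_const τ t).sub (hasDerivAt_id τ))
    have hcomp := ((hU.differentiable (by simp) (Y τ, t - τ)).hasFDerivAt).comp_hasDerivAt τ hcurve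
    have hval : fderiv ℝ U (Y τ, t - τ)
        ((-s * Y τ * (1 - Y τ) + m0 * f0 * (1 - Y τ) - m1 * f1 * Y τ, (0:ℝ) - 1))
        = (-s * Y τ * (1 - Y τ) + m0 * f0 * (1 - Y τ) - m1 * f1 * Y τ) * Q (Y τ, t - τ)
          - Ut (Y τ, t - τ) := by
      have hdec : ((-s * Y τ * (1 - Y τ) + m0 * f0 * (1 - Y τ) - m1 * f1 * Y τ, (0:ℝ) - 1)
            : ℝ × ℝ)
          = (-s * Y τ * (1 - Y τ) + m0 * f0 * (1 - Y τ) - m1 * f1 * Y τ) • ((1:ℝ), (0:ℝ))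
            + (-1 : ℝ) • ((0:ℝ), (1:ℝ)) := by
        simp [Prod.ext_iff]
      rw [hdec, map_add, map_smul, map_smul, smul_eq_mul, smul_eq_mul]
      have e1 : fderiv ℝ U (Y τ, t - τ) (1, 0) = Q (Y τ, t - τ) := rfl
      have e2 : fderiv ℝ U (Y τ, t - τ) (0, 1) = Ut (Y τ, t - τ) := rfl
      rw [e1, e2]
      ring
    rw [hval] at hcomp
    exact hcomp
  have hφderiv_nonpos : ∀ τ ∈ Ioo (0:ℝ) t, deriv φ τ ≤ 0 := by
    intro τ hτ
    rw [(hφd τ ⟨hτ.1.le, hτ.2.le⟩).deriv]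
    set a := Y τ with hadef
    have haI : a ∈ Icc (0:ℝ) 1 := ⟨Yge0 τ hτ.1.le, Yle1 τ hτ.1.le⟩
    have htτ : (0:ℝ) < t - τ := by linarith [hτ.2]
    have hp := pde0 a haI (t - τ) htτ
    have hcv0 := convex0 a haI (t - τ) htτ.le
    have hcv1 := convex1 a haI (t - τ) htτ.le
    have hj0 : l0 * f0 * (g0 * (1 - a) * Q (a, t - τ))
        ≤ l0 * f0 * (u (a + g0 * (1 - a)) (t - τ) - u a (t - τ)) :=
      mul_le_mul_of_nonneg_left hcv0 hl0f0
    have hj1 : l1 * f1 * (-(g1 * a) * Q (a, t - τ))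
        ≤ l1 * f1 * (u (a - g1 * a) (t - τ) - u a (t - τ)) :=
      mul_le_mul_of_nonneg_left hcv1 hl1f1
    -- Ut ≥ b(a) * Q
    have hUtge : (-s * a * (1 - a) + m0 * f0 * (1 - a) - m1 * f1 * a) * Q (a, t - τ)
        ≤ Ut (a, t - τ) := by
      have hm0' : m0 * f0 = l0 * f0 * g0 := by rw [hm0]; ring
      have hm1' : m1 * f1 = l1 * f1 * g1 := by rw [hm1]; ring
      rw [hm0', hm1']
      linarith only [hp, hj0, hj1]
    linarith only [hUtge]
  have hφcont : ContinuousOn φ (Icc 0 t) :=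
    fun τ hτ => ((hφd τ hτ).continuousAt).continuousWithinAt
  have hφanti : AntitoneOn φ (Icc 0 t) := by
    apply antitoneOn_of_deriv_nonpos (convex_Icc (0:ℝ) t) hφcont
    · intro τ hτ
      rw [interior_Icc] at hτ
      exact (hφd τ ⟨hτ.1.le, hτ.2.le⟩).differentiableAt.differentiableWithinAt
    · intro τ hτ
      rw [interior_Icc] at hτ
      exact hφderiv_nonpos τ hτ
  have hfinal : φ t ≤ φ 0 := hφanti ⟨le_refl 0, htge⟩ ⟨htge, le_refl t⟩ htge
  have hφt : φ t = Y t := by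
    have h1 : φ t = u (Y t) (t - t) := rfl
    rw [h1, sub_self]
    exact hu_init (Y t) ⟨Yge0 t htge, Yle1 t htge⟩
  have hφ0 : φ 0 = u x t := by
    have h1 : φ 0 = u (Y 0) (t - 0) := rfl
    rw [h1, hY0, sub_zero]
  rw [hφt, hφ0] at hfinal
  exact hfinal
end

section
/- Assume s ≥ m₀f₀ + m₁f₁ and let u be a C^∞ classical solution of (K1). Then for all x ∈ [0,1] and t ≥ 0 one has ∂ₓu(x,t) ≤ 2 e^{−m₁f₁ t} / ((1−x) + e^{−(s−m₀f₀)t}). -/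
open Set Filter Topology
set_option maxHeartbeats 1000000

private lemma aux_id1 (q1 g1 x E D Dm : ℝ) (hD : D ≠ 0) (hDm : Dm ≠ 0)
    (hrel : Dm = D + g1*x) (hDE : D = (1-x) + E) :
    -(g1*q1) / D - q1 * ((1-g1)/Dm - 1/D) = g1*q1*(x*(1-g1))/(D*Dm) := by
  subst hrel; subst hDE; field_simp; ring

private lemma aux_id3 (q0 g0 x E D Dp : ℝ) (hD : D ≠ 0) (hDp : Dp ≠ 0)
    (hrel : Dp = D - g0*(1-x)) (hDE : D = (1-x) + E) :
    -(q0 * ((1-g0)/Dp - 1/D)) = g0*q0*(E/(Dp*D)) := by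
  subst hrel; subst hDE; field_simp; ring

private lemma aux_id2 (s c E x D : ℝ) (hD : D ≠ 0) (hDE : D = (1-x) + E) :
    (s - c) * E / D^2 + s*(1-x)*x / D^2 + s*(1-2*x) / D + c*(E/(D*D))
      = s*((1-x)*(2*E+1-x))/(D*D) := by
  subst hDE; field_simp; ring

private lemma core_ineq (s q0 q1 g0 g1 E x : ℝ)
    (hs : 0 < s) (hq0 : 0 ≤ q0) (hq1 : 0 ≤ q1)
    (hg0 : g0 ∈ Set.Ioc (0:ℝ) 1) (hg1 : g1 ∈ Set.Ioc (0:ℝ) 1)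
    (hE : 0 < E) (hx0 : 0 ≤ x) (hx1 : x ≤ 1) :
    0 ≤ -(g1*q1) / ((1-x)+E) + (s - g0*q0) * E / ((1-x)+E)^2
      + s*(1-x)*x / ((1-x)+E)^2 + s*(1-2*x) / ((1-x)+E)
      - q0 * ((1-g0)/((1-g0)*(1-x)+E) - 1/((1-x)+E))
      - q1 * ((1-g1)/(((1-x)+E) + g1*x) - 1/((1-x)+E)) := by
  obtain ⟨hg0p, hg0le⟩ := hg0
  obtain ⟨hg1p, hg1le⟩ := hg1
  have hDpos : 0 < (1-x)+E := by nlinarith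
  have hDppos : 0 < (1-g0)*(1-x)+E := by nlinarith
  have hDmpos : 0 < ((1-x)+E) + g1*x := by nlinarith
  have id1 := aux_id1 q1 g1 x E ((1-x)+E) (((1-x)+E)+g1*x) hDpos.ne' hDmpos.ne' rfl rfl
  have id3 := aux_id3 q0 g0 x E ((1-x)+E) ((1-g0)*(1-x)+E) hDpos.ne' hDppos.ne'
    (by ring) rfl
  have id2 := aux_id2 s (g0*q0) E x ((1-x)+E) hDpos.ne' rfl
  have t2 : g0*q0*(E/(((1-x)+E)*((1-x)+E))) ≤ g0*q0*(E/(((1-g0)*(1-x)+E)*((1-x)+E))) := by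
    have hle : ((1-g0)*(1-x)+E)*((1-x)+E) ≤ ((1-x)+E)*((1-x)+E) := by
      nlinarith [mul_nonneg (mul_nonneg hg0p.le (by linarith : (0:ℝ) ≤ 1-x)) hDpos.le]
    gcongr
  have t1 : 0 ≤ g1*q1*(x*(1-g1))/(((1-x)+E)*(((1-x)+E)+g1*x)) := by
    apply div_nonneg _ (by positivity)
    apply mul_nonneg (by positivity)
    apply mul_nonneg hx0 (by linarith)
  have t3 : 0 ≤ s*((1-x)*(2*E+1-x))/(((1-x)+E)*((1-x)+E)) := by
    apply div_nonneg _ (by positivity)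
    apply mul_nonneg hs.le
    apply mul_nonneg (by nlinarith) (by nlinarith)
  linarith

noncomputable def Vd (u : ℝ → ℝ → ℝ) (x t : ℝ) : ℝ :=
  fderiv ℝ (Function.uncurry u) (x,t) (1,0)

noncomputable def Vxd (u : ℝ → ℝ → ℝ) (x t : ℝ) : ℝ :=
  fderiv ℝ (fderiv ℝ (Function.uncurry u)) (x,t) (1,0) (1,0)

noncomputable def Vtd (u : ℝ → ℝ → ℝ) (x t : ℝ) : ℝ :=
  fderiv ℝ (fderiv ℝ (Function.uncurry u)) (x,t) (0,1) (1,0)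

lemma hUd {u : ℝ → ℝ → ℝ} (hu : ContDiff ℝ (⊤ : ℕ∞) (Function.uncurry u)) :
    Differentiable ℝ (Function.uncurry u) := hu.differentiable (by simp)

lemma hU'd {u : ℝ → ℝ → ℝ} (hu : ContDiff ℝ (⊤ : ℕ∞) (Function.uncurry u)) :
    Differentiable ℝ (fderiv ℝ (Function.uncurry u)) :=
  (hu.fderiv_right (m := 1) (WithTop.coe_le_coe.mpr le_top)).differentiable (by simp)

lemma curveX (x t : ℝ) : HasDerivAt (fun y : ℝ => ((y, t) : ℝ × ℝ)) (1,0) x :=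
  HasDerivAt.prodMk (hasDerivAt_id _) (hasDerivAt_const _ _)

lemma curveT (x t : ℝ) : HasDerivAt (fun τ : ℝ => ((x, τ) : ℝ × ℝ)) (0,1) t :=
  HasDerivAt.prodMk (hasDerivAt_const _ _) (hasDerivAt_id _)

lemma L1 {u : ℝ → ℝ → ℝ} (hu : ContDiff ℝ (⊤ : ℕ∞) (Function.uncurry u)) (x t : ℝ) :
    HasDerivAt (fun y => u y t) (Vd u x t) x :=
  by have h := (hUd hu (x,t)).hasFDerivAt.comp_hasDerivAt x (curveX x t); exact h

lemma L1t {u : ℝ → ℝ → ℝ} (hu : ContDiff ℝ (⊤ : ℕ∞) (Function.uncurry u)) (x t : ℝ) :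
    HasDerivAt (fun τ => u x τ) (fderiv ℝ (Function.uncurry u) (x,t) (0,1)) t :=
  (hUd hu (x,t)).hasFDerivAt.comp_hasDerivAt t (curveT x t)

lemma evalFD {u : ℝ → ℝ → ℝ} (hu : ContDiff ℝ (⊤ : ℕ∞) (Function.uncurry u)) (x t : ℝ) (w : ℝ × ℝ) :
    HasFDerivAt (fun p => fderiv ℝ (Function.uncurry u) p w)
      ((ContinuousLinearMap.apply ℝ ℝ w).comp
        (fderiv ℝ (fderiv ℝ (Function.uncurry u)) (x,t))) (x,t) :=
  (ContinuousLinearMap.apply ℝ ℝ w).hasFDerivAt.comp _ (hU'd hu (x,t)).hasFDerivAt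

lemma L2 {u : ℝ → ℝ → ℝ} (hu : ContDiff ℝ (⊤ : ℕ∞) (Function.uncurry u)) (x t : ℝ) :
    HasDerivAt (fun y => Vd u y t) (Vxd u x t) x :=
  by have h := (evalFD hu x t (1,0)).comp_hasDerivAt x (curveX x t); exact h

lemma L3 {u : ℝ → ℝ → ℝ} (hu : ContDiff ℝ (⊤ : ℕ∞) (Function.uncurry u)) (x t : ℝ) :
    HasDerivAt (fun τ => Vd u x τ) (Vtd u x t) t :=
  (evalFD hu x t (1,0)).comp_hasDerivAt t (curveT x t)

lemma symm2 {u : ℝ → ℝ → ℝ} (hu : ContDiff ℝ (⊤ : ℕ∞) (Function.uncurry u)) (x t : ℝ) :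
    fderiv ℝ (fderiv ℝ (Function.uncurry u)) (x,t) (1,0) (0,1) = Vtd u x t :=
  (second_derivative_symmetric (fun p => (hUd hu p).hasFDerivAt)
    ((hU'd hu (x,t)).hasFDerivAt) _ _)

lemma L4 {u : ℝ → ℝ → ℝ} (hu : ContDiff ℝ (⊤ : ℕ∞) (Function.uncurry u)) (x t : ℝ) :
    HasDerivAt (fun y => deriv (fun τ => u y τ) t) (Vtd u x t) x := by
  have h : HasDerivAt (fun y => fderiv ℝ (Function.uncurry u) (y,t) (0,1))
      (fderiv ℝ (fderiv ℝ (Function.uncurry u)) (x,t) (1,0) (0,1)) x :=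
    by have h := (evalFD hu x t (0,1)).comp_hasDerivAt x (curveX x t); exact h
  rw [symm2 hu] at h
  refine h.congr_of_eventuallyEq ?_
  filter_upwards with y
  exact ((L1t hu y t).deriv)

lemma Vcont {u : ℝ → ℝ → ℝ} (hu : ContDiff ℝ (⊤ : ℕ∞) (Function.uncurry u)) :
    Continuous (fun p : ℝ × ℝ => Vd u p.1 p.2) := by
  have h1 : Continuous (fderiv ℝ (Function.uncurry u)) :=
    (hu.fderiv_right (m := 0) (by simp)).continuous
  exact (ContinuousLinearMap.apply ℝ ℝ ((1:ℝ),(0:ℝ))).continuous.comp h1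

lemma Vinit {u : ℝ → ℝ → ℝ} (hu : ContDiff ℝ (⊤ : ℕ∞) (Function.uncurry u))
    (hu_init : ∀ x ∈ Set.Icc (0:ℝ) 1, u x 0 = x)
    {y : ℝ} (hy : y ∈ Set.Icc (0:ℝ) 1) : Vd u y 0 = 1 := by
  have h1 : HasDerivWithinAt (fun z => u z 0) (Vd u y 0) (Set.Icc 0 1) y :=
    (L1 hu y 0).hasDerivWithinAt
  have h2 : HasDerivWithinAt (fun z => u z 0) 1 (Set.Icc (0:ℝ) 1) y :=
    (hasDerivWithinAt_id y (Set.Icc (0:ℝ) 1)).congr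
      (fun z hz => hu_init z hz) (hu_init y hy)
  exact UniqueDiffWithinAt.eq_deriv _ (uniqueDiffOn_Icc one_pos y hy) h1 h2

lemma L5 {u : ℝ → ℝ → ℝ} (hu : ContDiff ℝ (⊤ : ℕ∞) (Function.uncurry u))
    (s f0 f1 l0 l1 g0 g1 : ℝ)
    (hu_pde : ∀ x ∈ Set.Icc (0:ℝ) 1, ∀ t > (0:ℝ),
      deriv (fun τ => u x τ) t + s * (1 - x) * x * deriv (fun y => u y t) x
        = l0 * f0 * (u (x + g0 * (1 - x)) t - u x t)
          + l1 * f1 * (u (x - g1 * x) t - u x t))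
    {x t : ℝ} (hx : x ∈ Set.Icc (0:ℝ) 1) (ht : 0 < t) :
    Vtd u x t + s*(1-2*x)*Vd u x t + s*(1-x)*x*Vxd u x t
      = l0*f0*((1-g0)*Vd u (x+g0*(1-x)) t - Vd u x t)
        + l1*f1*((1-g1)*Vd u (x-g1*x) t - Vd u x t) := by
  set G : ℝ → ℝ := fun y => deriv (fun τ => u y τ) t + s*(1-y)*y*Vd u y t
    - (l0*f0*(u (y+g0*(1-y)) t - u y t) + l1*f1*(u (y-g1*y) t - u y t)) with hGdef
  have hG0 : ∀ y ∈ Set.Icc (0:ℝ) 1, G y = 0 := by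
    intro y hy
    have h := hu_pde y hy t ht
    rw [(L1 hu y t).deriv] at h
    simp only [hGdef]
    linarith
  have hpoly : HasDerivAt (fun y : ℝ => s*(1-y)*y) (s*(1-2*x)) x := by
    have h := (((hasDerivAt_const x (1:ℝ)).sub (hasDerivAt_id x)).mul
      (hasDerivAt_id x)).const_mul s
    exact (h.congr_deriv (by simp only [id_eq, Pi.sub_apply]; ring)).congr_of_eventuallyEq
      (Filter.Eventually.of_forall fun y => by simp only [id_eq, Pi.sub_apply, Pi.mul_apply]; ring)
  have hB : HasDerivAt (fun y => s*(1-y)*y*Vd u y t)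
      (s*(1-2*x)*Vd u x t + s*(1-x)*x*Vxd u x t) x := hpoly.mul (L2 hu x t)
  have haff0 : HasDerivAt (fun y : ℝ => y + g0*(1-y)) (1-g0) x := by
    have h := (hasDerivAt_id x).add
      (((hasDerivAt_const x (1:ℝ)).sub (hasDerivAt_id x)).const_mul g0)
    exact h.congr_deriv (by ring)
  have haff1 : HasDerivAt (fun y : ℝ => y - g1*y) (1-g1) x := by
    have h := (hasDerivAt_id x).sub ((hasDerivAt_id x).const_mul g1)
    exact h.congr_deriv (by ring)
  have hC : HasDerivAt (fun y => u (y+g0*(1-y)) t)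
      ((1-g0) * Vd u (x+g0*(1-x)) t) x := by
    have h := (L1 hu (x+g0*(1-x)) t).comp x haff0
    simpa [Function.comp_def, mul_comm] using h
  have hD : HasDerivAt (fun y => u (y-g1*y) t)
      ((1-g1) * Vd u (x-g1*x) t) x := by
    have h := (L1 hu (x-g1*x) t).comp x haff1
    simpa [Function.comp_def, mul_comm] using h
  have hL1 : HasDerivAt (fun y => u y t) (Vd u x t) x := L1 hu x t
  have hG : HasDerivAt G
      (Vtd u x t + (s*(1-2*x)*Vd u x t + s*(1-x)*x*Vxd u x t)
        - (l0*f0*((1-g0)*Vd u (x+g0*(1-x)) t - Vd u x t)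
          + l1*f1*((1-g1)*Vd u (x-g1*x) t - Vd u x t))) x :=
    ((L4 hu x t).add hB).sub
      (((hC.sub hL1).const_mul (l0*f0)).add ((hD.sub hL1).const_mul (l1*f1)))
  have h1 : HasDerivWithinAt G _ (Set.Icc (0:ℝ) 1) x := hG.hasDerivWithinAt
  have h2 : HasDerivWithinAt G 0 (Set.Icc (0:ℝ) 1) x :=
    (hasDerivWithinAt_const x _ (0:ℝ)).congr hG0 (hG0 x hx)
  have heq := UniqueDiffWithinAt.eq_deriv _ (uniqueDiffOn_Icc one_pos x hx) h1 h2
  linarith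

lemma deriv_nonneg_right {g : ℝ → ℝ} {d t0 : ℝ} (ht0 : 0 < t0)
    (hd : HasDerivAt g d t0) (hmax : ∀ τ ∈ Set.Icc 0 t0, g τ ≤ g t0) : 0 ≤ d := by
  have h := (hd.hasDerivWithinAt (s := Set.Iio t0))
  rw [hasDerivWithinAt_iff_tendsto_slope] at h
  have hss : Set.Iio t0 \ {t0} = Set.Iio t0 := Set.diff_singleton_eq_self (by simp)
  rw [hss] at h
  have hmem : Set.Ioo (0:ℝ) t0 ∈ 𝓝[<] t0 := Ioo_mem_nhdsLT_of_mem ⟨ht0, le_refl t0⟩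
  have hev : ∀ᶠ τ in 𝓝[<] t0, 0 ≤ slope g t0 τ := by
    filter_upwards [hmem] with τ hτ
    have h1 : g τ ≤ g t0 := hmax τ ⟨hτ.1.le, hτ.2.le⟩
    have h2 : τ - t0 < 0 := by linarith [hτ.2]
    rw [slope_def_field]
    rw [div_nonneg_iff]
    right
    constructor <;> [linarith; linarith]
  exact ge_of_tendsto h hev

lemma PhiX (e b a t x : ℝ) (hD : (1-x) + Real.exp (-a*t) ≠ 0) :
    HasDerivAt (fun y => (1+e*Real.exp t)*(2*Real.exp (-b*t)/((1-y)+Real.exp (-a*t))))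
      ((1+e*Real.exp t)*(2*Real.exp (-b*t)/((1-x)+Real.exp (-a*t))^2)) x := by
  have hden : HasDerivAt (fun y : ℝ => (1-y)+Real.exp (-a*t)) (-1) x := by
    simpa using (((hasDerivAt_const x (1:ℝ)).sub (hasDerivAt_id x)).add_const (Real.exp (-a*t)))
  have hq := (hasDerivAt_const x (2*Real.exp (-b*t))).div hden hD
  have h := hq.const_mul (1+e*Real.exp t)
  exact h.congr_deriv (by ring)

lemma PhiT (e b a x t : ℝ) (hD : (1-x) + Real.exp (-a*t) ≠ 0) :
    HasDerivAt (fun τ => (1+e*Real.exp τ)*(2*Real.exp (-b*τ)/((1-x)+Real.exp (-a*τ))))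
      (e*Real.exp t*(2*Real.exp (-b*t)/((1-x)+Real.exp (-a*t)))
        + (1+e*Real.exp t)*(-b*(2*Real.exp (-b*t)/((1-x)+Real.exp (-a*t)))
            + 2*Real.exp (-b*t)*(a*Real.exp (-a*t))/(((1-x)+Real.exp (-a*t))^2))) t := by
  have h1 : HasDerivAt (fun τ => 1+e*Real.exp τ) (e*Real.exp t) t := by
    simpa using (((Real.hasDerivAt_exp t).const_mul e).const_add 1)
  have hbt : HasDerivAt (fun τ : ℝ => -b*τ) (-b) t := by
    simpa using (hasDerivAt_id t).const_mul (-b)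
  have hat : HasDerivAt (fun τ : ℝ => -a*τ) (-a) t := by
    simpa using (hasDerivAt_id t).const_mul (-a)
  have h2 : HasDerivAt (fun τ => 2*Real.exp (-b*τ)) (2*(Real.exp (-b*t)*(-b))) t := by
    have := ((Real.hasDerivAt_exp (-b*t)).comp t hbt).const_mul (2:ℝ)
    simpa [Function.comp] using this
  have h3 : HasDerivAt (fun τ => (1-x)+Real.exp (-a*τ)) (Real.exp (-a*t)*(-a)) t := by
    have := ((Real.hasDerivAt_exp (-a*t)).comp t hat).const_add (1-x)
    simpa [Function.comp] using this
  have hq := h2.div h3 hD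
  have h := h1.mul hq
  have key : (-b*(2*Real.exp (-b*t)/((1-x)+Real.exp (-a*t)))
      + 2*Real.exp (-b*t)*(a*Real.exp (-a*t))/(((1-x)+Real.exp (-a*t))^2))
      = (2*(Real.exp (-b*t)*(-b))*((1-x)+Real.exp (-a*t))
          - 2*Real.exp (-b*t)*(Real.exp (-a*t)*(-a)))/(((1-x)+Real.exp (-a*t))^2) := by
    generalize Real.exp (-b*t) = P
    generalize hEE : Real.exp (-a*t) = E at hD ⊢
    field_simp
    ring
  rw [key]
  exact h

lemma supersol (s q0 q1 g0 g1 a b ep x t : ℝ)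
    (hs : 0 < s) (hq0 : 0 ≤ q0) (hq1 : 0 ≤ q1)
    (hg0 : g0 ∈ Set.Ioc (0:ℝ) 1) (hg1 : g1 ∈ Set.Ioc (0:ℝ) 1)
    (ha : a = s - g0*q0) (hb : b = g1*q1) (hep : 0 ≤ ep)
    (hx0 : 0 ≤ x) (hx1 : x ≤ 1) :
    ep*Real.exp t*(2*Real.exp (-b*t)/((1-x)+Real.exp (-a*t)))
    ≤ (ep*Real.exp t*(2*Real.exp (-b*t)/((1-x)+Real.exp (-a*t)))
          + (1+ep*Real.exp t)*(-b*(2*Real.exp (-b*t)/((1-x)+Real.exp (-a*t)))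
              + 2*Real.exp (-b*t)*(a*Real.exp (-a*t))/(((1-x)+Real.exp (-a*t))^2)))
      + s*(1-x)*x*((1+ep*Real.exp t)*(2*Real.exp (-b*t)/((1-x)+Real.exp (-a*t))^2))
      + s*(1-2*x)*((1+ep*Real.exp t)*(2*Real.exp (-b*t)/((1-x)+Real.exp (-a*t))))
      - q0*((1-g0)*((1+ep*Real.exp t)*(2*Real.exp (-b*t)/((1-(x+g0*(1-x)))+Real.exp (-a*t))))
            - (1+ep*Real.exp t)*(2*Real.exp (-b*t)/((1-x)+Real.exp (-a*t))))
      - q1*((1-g1)*((1+ep*Real.exp t)*(2*Real.exp (-b*t)/((1-(x-g1*x))+Real.exp (-a*t))))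
            - (1+ep*Real.exp t)*(2*Real.exp (-b*t)/((1-x)+Real.exp (-a*t)))) := by
  subst ha hb
  have hd1 : (1-(x+g0*(1-x))) + Real.exp (-(s-g0*q0)*t)
      = (1-g0)*(1-x)+Real.exp (-(s-g0*q0)*t) := by ring
  have hd2 : (1-(x-g1*x)) + Real.exp (-(s-g0*q0)*t)
      = ((1-x)+Real.exp (-(s-g0*q0)*t))+g1*x := by ring
  rw [hd1, hd2, ← sub_nonneg]
  have hcore := core_ineq s q0 q1 g0 g1 (Real.exp (-(s-g0*q0)*t)) x hs hq0 hq1 hg0 hg1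
    (Real.exp_pos _) hx0 hx1
  have hcpos : (0:ℝ) ≤ (1+ep*Real.exp t)*(2*Real.exp (-(g1*q1)*t)) := by positivity
  have heq : ((ep*Real.exp t*(2*Real.exp (-(g1*q1)*t)/((1-x)+Real.exp (-(s-g0*q0)*t)))
          + (1+ep*Real.exp t)*(-(g1*q1)*(2*Real.exp (-(g1*q1)*t)/((1-x)+Real.exp (-(s-g0*q0)*t)))
              + 2*Real.exp (-(g1*q1)*t)*((s-g0*q0)*Real.exp (-(s-g0*q0)*t))/(((1-x)+Real.exp (-(s-g0*q0)*t))^2)))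
      + s*(1-x)*x*((1+ep*Real.exp t)*(2*Real.exp (-(g1*q1)*t)/((1-x)+Real.exp (-(s-g0*q0)*t))^2))
      + s*(1-2*x)*((1+ep*Real.exp t)*(2*Real.exp (-(g1*q1)*t)/((1-x)+Real.exp (-(s-g0*q0)*t))))
      - q0*((1-g0)*((1+ep*Real.exp t)*(2*Real.exp (-(g1*q1)*t)/((1-g0)*(1-x)+Real.exp (-(s-g0*q0)*t))))
            - (1+ep*Real.exp t)*(2*Real.exp (-(g1*q1)*t)/((1-x)+Real.exp (-(s-g0*q0)*t))))
      - q1*((1-g1)*((1+ep*Real.exp t)*(2*Real.exp (-(g1*q1)*t)/(((1-x)+Real.exp (-(s-g0*q0)*t))+g1*x)))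
            - (1+ep*Real.exp t)*(2*Real.exp (-(g1*q1)*t)/((1-x)+Real.exp (-(s-g0*q0)*t)))))
      - ep*Real.exp t*(2*Real.exp (-(g1*q1)*t)/((1-x)+Real.exp (-(s-g0*q0)*t)))
      = ((1+ep*Real.exp t)*(2*Real.exp (-(g1*q1)*t)))
        * (-(g1*q1) / ((1-x)+Real.exp (-(s-g0*q0)*t))
          + (s - g0*q0) * Real.exp (-(s-g0*q0)*t) / ((1-x)+Real.exp (-(s-g0*q0)*t))^2
          + s*(1-x)*x / ((1-x)+Real.exp (-(s-g0*q0)*t))^2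
          + s*(1-2*x) / ((1-x)+Real.exp (-(s-g0*q0)*t))
          - q0 * ((1-g0)/((1-g0)*(1-x)+Real.exp (-(s-g0*q0)*t))
              - 1/((1-x)+Real.exp (-(s-g0*q0)*t)))
          - q1 * ((1-g1)/(((1-x)+Real.exp (-(s-g0*q0)*t)) + g1*x)
              - 1/((1-x)+Real.exp (-(s-g0*q0)*t)))) := by
    ring
  rw [heq]
  exact mul_nonneg hcpos hcore

/-- refined gradient estimate for (K1) when `s ≥ m₀f₀ + m₁f₁`:
`∂ₓu(x,t) ≤ 2 e^{-m₁f₁ t} / ((1-x) + e^{-(s-m₀f₀)t})`. -/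
theorem stmt_5 (f0 f1 g0 g1 l0 l1 s m0 m1 : ℝ) (u : ℝ → ℝ → ℝ)
    (hf : f1 < f0) (hf1 : 0 ≤ f1) (hs : s = f0 - f1)
    (hg0 : g0 ∈ Set.Ioc (0:ℝ) 1) (hg1 : g1 ∈ Set.Ioc (0:ℝ) 1)
    (hl0 : 0 ≤ l0) (hl1 : 0 ≤ l1)
    (hm0 : m0 = l0 * g0) (hm1 : m1 = l1 * g1)
    (hrange : m0 * f0 + m1 * f1 ≤ s)
    (hu_smooth : ContDiff ℝ (⊤ : ℕ∞) (Function.uncurry u))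
    (hu_pde : ∀ x ∈ Set.Icc (0:ℝ) 1, ∀ t > (0:ℝ),
      deriv (fun τ => u x τ) t + s * (1 - x) * x * deriv (fun y => u y t) x
        = l0 * f0 * (u (x + g0 * (1 - x)) t - u x t)
          + l1 * f1 * (u (x - g1 * x) t - u x t))
    (hu_init : ∀ x ∈ Set.Icc (0:ℝ) 1, u x 0 = x) :
    ∀ x ∈ Set.Icc (0:ℝ) 1, ∀ t ≥ (0:ℝ),
      deriv (fun y => u y t) x
        ≤ 2 * Real.exp (-(m1 * f1) * t)
            / ((1 - x) + Real.exp (-(s - m0 * f0) * t)) := by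
  intro x hx t ht
  have hf0 : 0 < f0 := lt_of_le_of_lt hf1 hf
  have hspos : 0 < s := by rw [hs]; linarith
  have hq0 : (0:ℝ) ≤ l0*f0 := mul_nonneg hl0 hf0.le
  have hq1 : (0:ℝ) ≤ l1*f1 := mul_nonneg hl1 hf1
  rw [(L1 hu_smooth x t).deriv]
  -- the key comparison with (1+ep e^τ) factor
  have key : ∀ ep > (0:ℝ), Vd u x t
      ≤ (1+ep*Real.exp t)*(2*Real.exp (-(m1*f1)*t)/((1-x)+Real.exp (-(s-m0*f0)*t))) := by
    intro ep hep
    rcases eq_or_lt_of_le ht with ht0 | htpos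
    · -- t = 0
      rw [← ht0]
      rw [Vinit hu_smooth hu_init hx]
      simp only [mul_zero, Real.exp_zero, neg_zero, zero_mul, mul_one]
      have h2x : (0:ℝ) < 1-x+1 := by have := hx.2; linarith
      have h1 : (1:ℝ) ≤ 2/(1-x+1) := by
        rw [le_div_iff₀ h2x]; have := hx.1; linarith
      nlinarith
    -- t > 0 : comparison on [0,1] × [0,t]
    set W : ℝ × ℝ → ℝ := fun p => Vd u p.1 p.2
      - (1+ep*Real.exp p.2)*(2*Real.exp (-(m1*f1)*p.2)
          /((1-p.1)+Real.exp (-(s-m0*f0)*p.2))) with hWdef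
    have hsuff : ∀ p ∈ (Set.Icc (0:ℝ) 1) ×ˢ (Set.Icc (0:ℝ) t), W p ≤ 0 → True := fun _ _ _ => trivial
    suffices hW : ∀ p ∈ (Set.Icc (0:ℝ) 1) ×ˢ (Set.Icc (0:ℝ) t), W p ≤ 0 by
      have := hW (x,t) (Set.mk_mem_prod hx ⟨ht, le_refl t⟩)
      simp only [hWdef] at this
      linarith
    by_contra hcon
    push_neg at hcon
    obtain ⟨pw, hpwK, hpwpos⟩ := hcon
    -- continuity of W on the strip {p.1 ≤ 1}
    have hWca : ∀ p : ℝ × ℝ, p.1 ≤ 1 → ContinuousAt W p := by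
      intro p hp1
      have hden : Continuous (fun q : ℝ×ℝ => (1-q.1)+Real.exp (-(s-m0*f0)*q.2)) := by
        fun_prop
      have hnum : Continuous (fun q : ℝ×ℝ => 2*Real.exp (-(m1*f1)*q.2)) := by fun_prop
      have hc1 : Continuous (fun q : ℝ×ℝ => 1+ep*Real.exp q.2) := by fun_prop
      have hdne : (1-p.1)+Real.exp (-(s-m0*f0)*p.2) ≠ 0 := by
        have := Real.exp_pos (-(s-m0*f0)*p.2); intro h; nlinarith
      exact ((Vcont hu_smooth).continuousAt).sub
        ((hc1.continuousAt).mul ((hnum.continuousAt).div (hden.continuousAt) hdne))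
    have hKc : IsCompact ((Set.Icc (0:ℝ) 1) ×ˢ (Set.Icc (0:ℝ) t)) :=
      (isCompact_Icc).prod isCompact_Icc
    have hWcOn : ContinuousOn W ((Set.Icc (0:ℝ) 1) ×ˢ (Set.Icc (0:ℝ) t)) := by
      intro p hp
      exact (hWca p hp.1.2).continuousWithinAt
    set S : Set (ℝ × ℝ) := ((Set.Icc (0:ℝ) 1) ×ˢ (Set.Icc (0:ℝ) t)) ∩ W ⁻¹' (Set.Ici 0)
      with hSdef
    have hSne : S.Nonempty := ⟨pw, hpwK, le_of_lt hpwpos⟩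
    have hScl : IsClosed S := hWcOn.preimage_isClosed_of_isClosed
      (IsClosed.prod isClosed_Icc isClosed_Icc) isClosed_Ici
    have hScomp : IsCompact S := hKc.of_isClosed_subset hScl Set.inter_subset_left
    obtain ⟨p0, hp0S, hp0min⟩ := hScomp.exists_isMinOn hSne (continuous_snd.continuousOn)
    obtain ⟨x0, t0⟩ := p0
    have hx0K : x0 ∈ Set.Icc (0:ℝ) 1 := hp0S.1.1
    have ht0K : t0 ∈ Set.Icc (0:ℝ) t := hp0S.1.2
    have hW0 : 0 ≤ W (x0,t0) := hp0S.2
    -- t0 > 0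
    have ht0pos : 0 < t0 := by
      rcases lt_or_eq_of_le ht0K.1 with h | h
      · exact h
      exfalso
      rw [← h] at hW0
      have hVi : Vd u x0 0 = 1 := Vinit hu_smooth hu_init hx0K
      simp only [hWdef, mul_zero, neg_zero, Real.exp_zero, mul_one] at hW0
      rw [hVi] at hW0
      have h2x : (0:ℝ) < 1-x0+1 := by have := hx0K.2; linarith
      have h1 : (1:ℝ) ≤ 2/(1-x0+1) := by
        rw [le_div_iff₀ h2x]; have := hx0K.1; linarith
      nlinarith
    -- strict negativity before t0
    have hWneg : ∀ y ∈ Set.Icc (0:ℝ) 1, ∀ τ, 0 ≤ τ → τ < t0 → W (y,τ) < 0 := by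
      intro y hy τ h0 hlt
      by_contra hge
      push_neg at hge
      have hmem : (y,τ) ∈ S := ⟨Set.mk_mem_prod hy ⟨h0, le_trans hlt.le ht0K.2⟩, hge⟩
      have := isMinOn_iff.mp hp0min (y,τ) hmem
      simp only at this
      linarith
    -- W ≤ 0 at time t0
    have hWt0 : ∀ y ∈ Set.Icc (0:ℝ) 1, W (y,t0) ≤ 0 := by
      intro y hy
      have hcont : ContinuousAt (fun τ => W (y,τ)) t0 :=
        (hWca (y,t0) hy.2).comp (Continuous.continuousAt (by fun_prop))
      have htend : Filter.Tendsto (fun τ => W (y,τ)) (𝓝[<] t0) (𝓝 (W (y,t0))) :=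
        hcont.tendsto.mono_left nhdsWithin_le_nhds
      refine le_of_tendsto htend ?_
      filter_upwards [Ioo_mem_nhdsLT_of_mem ⟨ht0pos, le_refl t0⟩] with τ hτ
      exact (hWneg y hy τ hτ.1.le hτ.2).le
    have hW00 : W (x0,t0) = 0 := le_antisymm (hWt0 x0 hx0K) hW0
    -- abbreviations for values
    have hD0pos : 0 < (1-x0)+Real.exp (-(s-m0*f0)*t0) := by
      have := Real.exp_pos (-(s-m0*f0)*t0); have := hx0K.2; nlinarith
    have hDne : (1-x0)+Real.exp (-(s-m0*f0)*t0) ≠ 0 := ne_of_gt hD0pos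
    -- time derivative at touch point
    have hPsit := PhiT ep (m1*f1) (s-m0*f0) x0 t0 hDne
    have hg : HasDerivAt (fun τ => W (x0,τ))
        (Vtd u x0 t0 - (ep*Real.exp t0*(2*Real.exp (-(m1*f1)*t0)/((1-x0)+Real.exp (-(s-m0*f0)*t0)))
          + (1+ep*Real.exp t0)*(-(m1*f1)*(2*Real.exp (-(m1*f1)*t0)/((1-x0)+Real.exp (-(s-m0*f0)*t0)))
              + 2*Real.exp (-(m1*f1)*t0)*((s-m0*f0)*Real.exp (-(s-m0*f0)*t0))
                /(((1-x0)+Real.exp (-(s-m0*f0)*t0))^2)))) t0 :=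
      (L3 hu_smooth x0 t0).sub hPsit
    have hmaxt : ∀ τ ∈ Set.Icc 0 t0, (fun τ => W (x0,τ)) τ ≤ (fun τ => W (x0,τ)) t0 := by
      intro τ hτ
      simp only
      rw [hW00]
      rcases eq_or_lt_of_le hτ.2 with he | hlt
      · rw [he]; rw [hW00]
      · exact (hWneg x0 hx0K τ hτ.1 hlt).le
    have hDge := deriv_nonneg_right ht0pos hg hmaxt
    -- space derivative at touch point
    have hPsix := PhiX ep (m1*f1) (s-m0*f0) t0 x0 hDne
    have hgx : HasDerivAt (fun y => W (y,t0))
        (Vxd u x0 t0 - (1+ep*Real.exp t0)*(2*Real.exp (-(m1*f1)*t0)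
          /((1-x0)+Real.exp (-(s-m0*f0)*t0))^2)) x0 :=
      (L2 hu_smooth x0 t0).sub hPsix
    have hsx : s*(1-x0)*x0*(Vxd u x0 t0)
        = s*(1-x0)*x0*((1+ep*Real.exp t0)*(2*Real.exp (-(m1*f1)*t0)
            /((1-x0)+Real.exp (-(s-m0*f0)*t0))^2)) := by
      by_cases hx00 : x0 = 0
      · rw [hx00]; ring
      by_cases hx01 : x0 = 1
      · rw [hx01]; ring
      have hioo : x0 ∈ Set.Ioo (0:ℝ) 1 :=
        ⟨lt_of_le_of_ne hx0K.1 (Ne.symm hx00), lt_of_le_of_ne hx0K.2 hx01⟩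
      have hmax : IsLocalMax (fun y => W (y,t0)) x0 := by
        filter_upwards [Ioo_mem_nhds hioo.1 hioo.2] with y hy
        show W (y,t0) ≤ W (x0,t0)
        rw [hW00]
        exact hWt0 y ⟨hy.1.le, hy.2.le⟩
      have hzero := hmax.hasDerivAt_eq_zero hgx
      have : Vxd u x0 t0 = (1+ep*Real.exp t0)*(2*Real.exp (-(m1*f1)*t0)
          /((1-x0)+Real.exp (-(s-m0*f0)*t0))^2) := by linarith
      rw [this]
    -- PDE for V at touch point
    have hpde := L5 hu_smooth s f0 f1 l0 l1 g0 g1 hu_pde hx0K ht0pos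
    -- mutation displacement points
    have hxpIcc : x0+g0*(1-x0) ∈ Set.Icc (0:ℝ) 1 := by
      constructor
      · nlinarith [hx0K.1, hx0K.2, hg0.1, hg0.2]
      · nlinarith [hx0K.1, hx0K.2, hg0.1, hg0.2]
    have hxmIcc : x0-g1*x0 ∈ Set.Icc (0:ℝ) 1 := by
      constructor
      · nlinarith [hx0K.1, hx0K.2, hg1.1, hg1.2]
      · nlinarith [hx0K.1, hx0K.2, hg1.1, hg1.2]
    have hVp : Vd u (x0+g0*(1-x0)) t0
        ≤ (1+ep*Real.exp t0)*(2*Real.exp (-(m1*f1)*t0)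
            /((1-(x0+g0*(1-x0)))+Real.exp (-(s-m0*f0)*t0))) := by
      have := hWt0 (x0+g0*(1-x0)) hxpIcc
      simp only [hWdef] at this
      linarith
    have hVm : Vd u (x0-g1*x0) t0
        ≤ (1+ep*Real.exp t0)*(2*Real.exp (-(m1*f1)*t0)
            /((1-(x0-g1*x0))+Real.exp (-(s-m0*f0)*t0))) := by
      have := hWt0 (x0-g1*x0) hxmIcc
      simp only [hWdef] at this
      linarith
    have hV0 : Vd u x0 t0 = (1+ep*Real.exp t0)*(2*Real.exp (-(m1*f1)*t0)
        /((1-x0)+Real.exp (-(s-m0*f0)*t0))) := by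
      simp only [hWdef] at hW00
      linarith
    -- supersolution inequality
    have hsup := supersol s (l0*f0) (l1*f1) g0 g1 (s-m0*f0) (m1*f1) ep x0 t0
      hspos hq0 hq1 hg0 hg1 (by rw [hm0]; ring) (by rw [hm1]; ring) hep.le hx0K.1 hx0K.2
    -- comparison of nonlocal terms
    have hA : l0*f0*((1-g0)*Vd u (x0+g0*(1-x0)) t0 - Vd u x0 t0)
        ≤ l0*f0*((1-g0)*((1+ep*Real.exp t0)*(2*Real.exp (-(m1*f1)*t0)
            /((1-(x0+g0*(1-x0)))+Real.exp (-(s-m0*f0)*t0))))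
          - (1+ep*Real.exp t0)*(2*Real.exp (-(m1*f1)*t0)
            /((1-x0)+Real.exp (-(s-m0*f0)*t0)))) := by
      apply mul_le_mul_of_nonneg_left _ hq0
      have h1 := mul_le_mul_of_nonneg_left hVp (show (0:ℝ) ≤ 1-g0 by linarith [hg0.2])
      linarith [hV0]
    have hB : l1*f1*((1-g1)*Vd u (x0-g1*x0) t0 - Vd u x0 t0)
        ≤ l1*f1*((1-g1)*((1+ep*Real.exp t0)*(2*Real.exp (-(m1*f1)*t0)
            /((1-(x0-g1*x0))+Real.exp (-(s-m0*f0)*t0))))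
          - (1+ep*Real.exp t0)*(2*Real.exp (-(m1*f1)*t0)
            /((1-x0)+Real.exp (-(s-m0*f0)*t0)))) := by
      apply mul_le_mul_of_nonneg_left _ hq1
      have h1 := mul_le_mul_of_nonneg_left hVm (show (0:ℝ) ≤ 1-g1 by linarith [hg1.2])
      linarith [hV0]
    have hepterm : 0 < ep*Real.exp t0*(2*Real.exp (-(m1*f1)*t0)
        /((1-x0)+Real.exp (-(s-m0*f0)*t0))) := by
      apply mul_pos (mul_pos hep (Real.exp_pos _))
      apply div_pos (by positivity) hD0pos
    rw [hV0] at hpde hA hB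
    linarith [hsup, hDge, hsx, hpde, hA, hB, hepterm]
  -- conclude by letting ep → 0
  have hDx : 0 < (1-x)+Real.exp (-(s-m0*f0)*t) := by
    have := Real.exp_pos (-(s-m0*f0)*t); have := hx.2; nlinarith
  set dv := 2*Real.exp (-(m1*f1)*t)/((1-x)+Real.exp (-(s-m0*f0)*t)) with hdv
  have hdvpos : 0 < dv := by
    rw [hdv]; apply div_pos (by positivity) hDx
  by_contra hcon
  push_neg at hcon
  have hepdef : 0 < (Vd u x t - dv)/(2*Real.exp t*dv) := by
    apply div_pos (by linarith) (by positivity)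
  have hk := key _ hepdef
  have hcalc : (Vd u x t - dv)/(2*Real.exp t*dv)*Real.exp t*dv = (Vd u x t - dv)/2 := by
    field_simp
  nlinarith [hk, hcalc, hdvpos]
end

section
/- Assume s ≥ m₀f₀ + m₁f₁ and define p̄(x,t) = 2 e^{(s−m₀f₀+m₁f₁)t} / (1 + (1−x) e^{(s−m₀f₀)t}) for x ∈ [0,1], t ≥ 0. Then p̄(x,0) ≥ 1 for all x ∈ [0,1], and p̄ is a supersolution of the derived equation (K1_x): for all x ∈ [0,1] and t > 0, ∂ₜp̄(x,t) + s(1−x)x ∂ₓp̄(x,t) + (s(1−2x) + m₀f₀ + m₁f₁) p̄(x,t) ≥ λ₀f₀(1−γ₀)[p̄(x+γ₀(1−x),t) − p̄(x,t)] + λ₁f₁(1−γ₁)[p̄(x−γ₁x,t) − p̄(x,t)]. -/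
open Set Filter Topology

/-- The barrier function `p̄(x,t) = 2 e^{(s-m₀f₀+m₁f₁)t} / (1 + (1-x) e^{(s-m₀f₀)t})`. -/
noncomputable def pbar (s m0 m1 f0 f1 : ℝ) (x t : ℝ) : ℝ :=
  2 * Real.exp ((s - m0 * f0 + m1 * f1) * t)
    / (1 + (1 - x) * Real.exp ((s - m0 * f0) * t))

/-! Write `w = (1 - x) e^{(s - m₀f₀)t}`, so that `p̄ = 2 e^{(s - m₀f₀ + m₁f₁)t} / (1 + w)`.
Both derivatives of `p̄` are `p̄` times a function of `w`, and the (K1_x) operator applied to `p̄`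
equals `p̄ · (s(1-x)(2 - r(w)) + 2m₁f₁ + m₀f₀ r(w))` with `r(w) = w / (1 + w) ∈ [0, 1)`.
An upward jump `x ↦ x + γ₀(1-x)` turns `w` into `(1-γ₀)w`, so, as `m₀ = λ₀γ₀`, the first mutation
term is `p̄ · m₀f₀ r((1-γ₀)w) ≤ p̄ · m₀f₀ r(w)`; the downward jump decreases `p̄`, so the second
mutation term is nonpositive. -/

noncomputable def pbarWeight (s m0 f0 x t : ℝ) : ℝ :=
  (1 - x) * Real.exp ((s - m0 * f0) * t)

lemma div_one_add_le_div_one_add {a b : ℝ} (ha : 0 ≤ a) (hab : a ≤ b) :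
    a / (1 + a) ≤ b / (1 + b) := by
  rw [div_le_div_iff₀ (by linarith) (by linarith)]
  linarith

section Barrier

variable {s m0 m1 f0 f1 : ℝ}

lemma pbar_eq_div_one_add_pbarWeight (x t : ℝ) :
    pbar s m0 m1 f0 f1 x t
      = 2 * Real.exp ((s - m0 * f0 + m1 * f1) * t) / (1 + pbarWeight s m0 f0 x t) :=
  rfl

lemma pbarWeight_nonneg {x : ℝ} (hx : x ≤ 1) (t : ℝ) : 0 ≤ pbarWeight s m0 f0 x t :=
  mul_nonneg (by linarith) (Real.exp_pos _).le

lemma pbarWeight_add_mul_one_sub (g x t : ℝ) :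
    pbarWeight s m0 f0 (x + g * (1 - x)) t = (1 - g) * pbarWeight s m0 f0 x t := by
  unfold pbarWeight; ring

lemma one_le_pbar_zero {x : ℝ} (hx0 : 0 ≤ x) (hx2 : x < 2) : 1 ≤ pbar s m0 m1 f0 f1 x 0 := by
  simp only [pbar, mul_zero, Real.exp_zero, mul_one]
  rw [le_div_iff₀ (by linarith)]
  linarith

lemma pbar_pos {x : ℝ} (hx : x ≤ 1) (t : ℝ) : 0 < pbar s m0 m1 f0 f1 x t := by
  rw [pbar_eq_div_one_add_pbarWeight]
  have := pbarWeight_nonneg (s := s) (m0 := m0) (f0 := f0) hx t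
  positivity

lemma pbar_le_pbar {x y : ℝ} (hyx : y ≤ x) (hx : x ≤ 1) (t : ℝ) :
    pbar s m0 m1 f0 f1 y t ≤ pbar s m0 m1 f0 f1 x t := by
  rw [pbar_eq_div_one_add_pbarWeight, pbar_eq_div_one_add_pbarWeight]
  have hw := pbarWeight_nonneg (s := s) (m0 := m0) (f0 := f0) hx t
  refine div_le_div_of_nonneg_left (by positivity) (by linarith) ?_
  unfold pbarWeight
  nlinarith [Real.exp_pos ((s - m0 * f0) * t)]

lemma pbar_add_mul_one_sub_sub {x g : ℝ} (hx : x ≤ 1) (hg : g ≤ 1) (t : ℝ) :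
    pbar s m0 m1 f0 f1 (x + g * (1 - x)) t - pbar s m0 m1 f0 f1 x t
      = pbar s m0 m1 f0 f1 x t * (g * pbarWeight s m0 f0 x t
          / (1 + (1 - g) * pbarWeight s m0 f0 x t)) := by
  have hw := pbarWeight_nonneg (s := s) (m0 := m0) (f0 := f0) hx t
  have hgw : 0 ≤ (1 - g) * pbarWeight s m0 f0 x t := mul_nonneg (by linarith) hw
  simp only [pbar_eq_div_one_add_pbarWeight, pbarWeight_add_mul_one_sub]
  field_simp
  ring

lemma hasDerivAt_pbar_time {x t : ℝ} (hw : 1 + pbarWeight s m0 f0 x t ≠ 0) :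
    HasDerivAt (fun τ => pbar s m0 m1 f0 f1 x τ)
      (pbar s m0 m1 f0 f1 x t * (s - m0 * f0 + m1 * f1
        - (s - m0 * f0) * (pbarWeight s m0 f0 x t / (1 + pbarWeight s m0 f0 x t)))) t := by
  have hnum := (((hasDerivAt_id t).const_mul (s - m0 * f0 + m1 * f1)).exp).const_mul 2
  have hden := ((((hasDerivAt_id t).const_mul (s - m0 * f0)).exp).const_mul (1 - x)).const_add 1
  refine (hnum.div hden hw).congr_deriv ?_
  simp only [pbar_eq_div_one_add_pbarWeight, pbarWeight, id] at hw ⊢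
  field_simp

lemma hasDerivAt_pbar_space {x t : ℝ} (hw : 1 + pbarWeight s m0 f0 x t ≠ 0) :
    HasDerivAt (fun y => pbar s m0 m1 f0 f1 y t)
      (pbar s m0 m1 f0 f1 x t
        * (Real.exp ((s - m0 * f0) * t) / (1 + pbarWeight s m0 f0 x t))) x := by
  have hden := (((hasDerivAt_id x).const_sub 1).mul_const
    (Real.exp ((s - m0 * f0) * t))).const_add 1
  have hnum := hasDerivAt_const x (2 * Real.exp ((s - m0 * f0 + m1 * f1) * t))
  refine (hnum.div hden hw).congr_deriv ?_
  simp only [pbar_eq_div_one_add_pbarWeight, pbarWeight, id] at hw ⊢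
  field_simp
  ring

lemma pbar_K1x_operator_eq {x t : ℝ} (hx : x ≤ 1) :
    deriv (fun τ => pbar s m0 m1 f0 f1 x τ) t
        + s * (1 - x) * x * deriv (fun y => pbar s m0 m1 f0 f1 y t) x
        + (s * (1 - 2 * x) + m0 * f0 + m1 * f1) * pbar s m0 m1 f0 f1 x t
      = pbar s m0 m1 f0 f1 x t
          * (s * (1 - x) * (2 - pbarWeight s m0 f0 x t / (1 + pbarWeight s m0 f0 x t))
            + 2 * (m1 * f1)
            + m0 * f0 * (pbarWeight s m0 f0 x t / (1 + pbarWeight s m0 f0 x t))) := by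
  have hw : 1 + pbarWeight s m0 f0 x t ≠ 0 := by
    linarith [pbarWeight_nonneg (s := s) (m0 := m0) (f0 := f0) hx t]
  rw [(hasDerivAt_pbar_time hw).deriv, (hasDerivAt_pbar_space hw).deriv]
  unfold pbarWeight
  ring

end Barrier

theorem stmt_6_general (f0 f1 g0 g1 l0 l1 s m0 m1 : ℝ)
    (hf : f1 < f0) (hf1 : 0 ≤ f1) (hs : s = f0 - f1)
    (hg0 : g0 ∈ Set.Ioc (0:ℝ) 1) (hg1 : g1 ∈ Set.Ioc (0:ℝ) 1)
    (hl0 : 0 ≤ l0) (hl1 : 0 ≤ l1)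
    (hm0 : m0 = l0 * g0) (hm1 : m1 = l1 * g1) :
    (∀ x ∈ Set.Icc (0:ℝ) 1, 1 ≤ pbar s m0 m1 f0 f1 x 0) ∧
    (∀ x ∈ Set.Icc (0:ℝ) 1, ∀ t > (0:ℝ),
      deriv (fun τ => pbar s m0 m1 f0 f1 x τ) t
        + s * (1 - x) * x * deriv (fun y => pbar s m0 m1 f0 f1 y t) x
        + (s * (1 - 2 * x) + m0 * f0 + m1 * f1) * pbar s m0 m1 f0 f1 x t
      ≥ l0 * f0 * (1 - g0)
          * (pbar s m0 m1 f0 f1 (x + g0 * (1 - x)) t - pbar s m0 m1 f0 f1 x t)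
        + l1 * f1 * (1 - g1)
          * (pbar s m0 m1 f0 f1 (x - g1 * x) t - pbar s m0 m1 f0 f1 x t)) := by
  refine ⟨fun x hx => one_le_pbar_zero hx.1 (by linarith [hx.2]), fun x ⟨hx0, hx1⟩ t _ => ?_⟩
  set p := pbar s m0 m1 f0 f1 x t
  set w := pbarWeight s m0 f0 x t
  have hp : 0 < p := pbar_pos hx1 t
  have hw : 0 ≤ w := pbarWeight_nonneg hx1 t
  have hm0f0 : 0 ≤ m0 * f0 := by rw [hm0]; exact mul_nonneg (mul_nonneg hl0 hg0.1.le) (by linarith)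
  have hm1f1 : 0 ≤ m1 * f1 := by rw [hm1]; exact mul_nonneg (mul_nonneg hl1 hg1.1.le) hf1
  have hr : w / (1 + w) ≤ 1 := by rw [div_le_iff₀ (by linarith)]; linarith
  have hjump : (1 - g0) * w / (1 + (1 - g0) * w) ≤ w / (1 + w) :=
    div_one_add_le_div_one_add (mul_nonneg (sub_nonneg.2 hg0.2) hw)
      (mul_le_of_le_one_left hw (by linarith [hg0.1]))
  have hdown : pbar s m0 m1 f0 f1 (x - g1 * x) t ≤ p :=
    pbar_le_pbar (sub_le_self _ (mul_nonneg hg1.1.le hx0)) hx1 t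
  rw [ge_iff_le, pbar_K1x_operator_eq hx1, pbar_add_mul_one_sub_sub hx1 hg0.2]
  calc l0 * f0 * (1 - g0) * (p * (g0 * w / (1 + (1 - g0) * w)))
        + l1 * f1 * (1 - g1) * (pbar s m0 m1 f0 f1 (x - g1 * x) t - p)
      = p * (m0 * f0 * ((1 - g0) * w / (1 + (1 - g0) * w)))
        + l1 * f1 * (1 - g1) * (pbar s m0 m1 f0 f1 (x - g1 * x) t - p) := by rw [hm0]; ring
    _ ≤ p * (m0 * f0 * (w / (1 + w))) + 0 := by
        gcongr
        exact mul_nonpos_of_nonneg_of_nonpos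
          (mul_nonneg (mul_nonneg hl1 hf1) (by linarith [hg1.2])) (by linarith)
    _ ≤ p * (s * (1 - x) * (2 - w / (1 + w)) + 2 * (m1 * f1) + m0 * f0 * (w / (1 + w))) := by
        rw [add_zero]
        gcongr p * ?_
        have : 0 ≤ s * (1 - x) * (2 - w / (1 + w)) :=
          mul_nonneg (mul_nonneg (by linarith) (by linarith)) (by linarith)
        linarith

/-- if `s ≥ m₀f₀ + m₁f₁` then `p̄(·,0) ≥ 1` and `p̄` is a
supersolution of the derived equation (K1_x). -/
theorem stmt_6 (f0 f1 g0 g1 l0 l1 s m0 m1 : ℝ)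
    (hf : f1 < f0) (hf1 : 0 ≤ f1) (hs : s = f0 - f1)
    (hg0 : g0 ∈ Set.Ioc (0:ℝ) 1) (hg1 : g1 ∈ Set.Ioc (0:ℝ) 1)
    (hl0 : 0 ≤ l0) (hl1 : 0 ≤ l1)
    (hm0 : m0 = l0 * g0) (hm1 : m1 = l1 * g1)
    (hrange : m0 * f0 + m1 * f1 ≤ s) :
    (∀ x ∈ Set.Icc (0:ℝ) 1, 1 ≤ pbar s m0 m1 f0 f1 x 0) ∧
    (∀ x ∈ Set.Icc (0:ℝ) 1, ∀ t > (0:ℝ),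
      deriv (fun τ => pbar s m0 m1 f0 f1 x τ) t
        + s * (1 - x) * x * deriv (fun y => pbar s m0 m1 f0 f1 y t) x
        + (s * (1 - 2 * x) + m0 * f0 + m1 * f1) * pbar s m0 m1 f0 f1 x t
      ≥ l0 * f0 * (1 - g0)
          * (pbar s m0 m1 f0 f1 (x + g0 * (1 - x)) t - pbar s m0 m1 f0 f1 x t)
        + l1 * f1 * (1 - g1)
          * (pbar s m0 m1 f0 f1 (x - g1 * x) t - pbar s m0 m1 f0 f1 x t)) :=
  stmt_6_general f0 f1 g0 g1 l0 l1 s m0 m1 hf hf1 hs hg0 hg1 hl0 hl1 hm0 hm1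
end
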